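/- arXiv:1605.06395 — 9 statements merged into one kernel-verified Lean document; each statement's English description precedes it below -/
import Mathlib

section
/- Let G = G₀ *_H G₁ be a nondegenerate free product with amalgamation, and let K₀, K₁ be the subgroups defined below. Then the following are equivalent: (i) K₀ = K₁ = {e}; (ii) for every finite subset F ⊆ G \ {e} there exists g ∈ G such that gFg⁻¹ ∩ H = ∅; (iii) for every finite subset F ⊆ H \ {e} there exists g ∈ G such that gFg⁻¹ ∩ H = ∅. -/
variable {G : Type*} [Group G]

/-- `AltWord G₀ G₁ H j w`: the list `w` is an alternating word whose `i`-th letter lies in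
`G_{(i+j) mod 2} \ H`. -/
def AltWord (G₀ G₁ H : Subgroup G) (j : ℕ) (w : List G) : Prop :=
  ∀ (i : ℕ) (hi : i < w.length),
    w.get ⟨i, hi⟩ ∈ (if (i + j) % 2 = 0 then (G₀ : Set G) else (G₁ : Set G)) \ (H : Set G)

/-- `G` is the free product of its subgroups `G₀` and `G₁` amalgamated over their common
subgroup `H` (internal characterization: `G₀ ∩ G₁ = H`, the subgroups `G₀` and `G₁` generate
`G`, and no nonempty alternating word with letters in `G₀ \ H` and `G₁ \ H` has product
in `H`). -/
structure IsAmalgam (G₀ G₁ H : Subgroup G) : Prop where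
  le_left : H ≤ G₀
  le_right : H ≤ G₁
  inf_eq : G₀ ⊓ G₁ = H
  closure_eq_top : Subgroup.closure ((G₀ : Set G) ∪ (G₁ : Set G)) = ⊤
  reduced : ∀ (j : ℕ) (w : List G), w ≠ [] → AltWord G₀ G₁ H j w → w.prod ∉ H

/-- The amalgam `G₀ *_H G₁` is *nondegenerate*: `([G₀ : H] − 1) · ([G₁ : H] − 1) ≥ 2`,
i.e. `H` is a proper subgroup of both `G₀` and `G₁`, and has index at least `3` (possibly
infinite) in at least one of them. -/
def Nondegenerate (G₀ G₁ H : Subgroup G) : Prop :=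
  H.relIndex G₀ ≠ 1 ∧ H.relIndex G₁ ≠ 1 ∧ ¬(H.relIndex G₀ = 2 ∧ H.relIndex G₁ = 2)

/-- `T_{j,k}`: the set of elements of `G` that are products of alternating words of length
`k` whose first letter lies in `G_j \ H`; by convention `T_{j,0} = H`. -/
def TT (G₀ G₁ H : Subgroup G) (j k : ℕ) : Set G :=
  if k = 0 then (H : Set G)
  else {g | ∃ w : List G, w.length = k ∧ AltWord G₀ G₁ H j w ∧ w.prod = g}

/-- `C_{j,k} = ⋂_{g ∈ T_{j,k}} g H g⁻¹`. -/
def CC (G₀ G₁ H : Subgroup G) (j k : ℕ) : Set G :=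
  ⋂ g ∈ TT G₀ G₁ H j k, {x | g⁻¹ * x * g ∈ H}

/-- `K_j = ⋂_{k ≥ 0} C_{j,k}`. -/
def KK (G₀ G₁ H : Subgroup G) (j : ℕ) : Set G :=
  ⋂ k : ℕ, CC G₀ G₁ H j k

/-- The kernel of the amalgam, `ker G = ⋂_{g ∈ G} g H g⁻¹`, as a set. -/
def amalgamKerSet (H : Subgroup G) : Set G :=
  ⋂ g : G, {x | g⁻¹ * x * g ∈ H}

/-!
Edges of the Bass–Serre tree of `G₀ *_H G₁` are the cosets `gH`, and `x` fixes the edge `gH`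
iff `g⁻¹ x g ∈ H`. Alternating words of type `j` are the reduced paths leaving the base edge
through its `G_j`-vertex, so `K_j` is the pointwise stabiliser of the corresponding half-tree
(`mem_KK_iff`).

(i) ⇒ (ii): a nontrivial element fixes no half-tree. Fixed-edge sets are subtrees, so an
element moving an edge `e` and fixing an edge on one side of `e` moves every edge on the other
side (`IsAmalgam.conj_notMem_of_conj_mem`). Nondegeneracy yields two disjoint half-trees below
any edge; hence inside any half-tree there is a smaller one moved entirely by a given
`x ≠ 1`, and an induction on `F` produces an edge moved by every element of `F`.

(iii) ⇒ (i): conjugating `1 ≠ x ∈ K_j` by a letter of `G_j \ H` gives `1 ≠ y ∈ K_{j+1}`. Every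
edge lies in the half-tree of type `0` or of type `1` (normal forms), so for every `g` one of
`g x g⁻¹`, `g y g⁻¹` lies in `H`, contradicting (iii) for `F = {x, y}`.
-/

section

variable {G₀ G₁ H : Subgroup G}

variable (G₀ G₁) in
def altFactor (m : ℕ) : Subgroup G := if m % 2 = 0 then G₀ else G₁

variable (G₀ G₁ H) in
def AltLetter (m : ℕ) (a : G) : Prop := a ∈ altFactor G₀ G₁ m ∧ a ∉ H

theorem altFactor_congr {m m' : ℕ} (h : m % 2 = m' % 2) :
    altFactor G₀ G₁ m = altFactor G₀ G₁ m' := by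
  rw [altFactor, altFactor, h]

theorem AltLetter.congr {m m' : ℕ} (h : m % 2 = m' % 2) {a : G} (ha : AltLetter G₀ G₁ H m a) :
    AltLetter G₀ G₁ H m' a := by
  rwa [AltLetter, ← altFactor_congr h]

theorem AltLetter.inv {m : ℕ} {a : G} (ha : AltLetter G₀ G₁ H m a) :
    AltLetter G₀ G₁ H m a⁻¹ :=
  ⟨inv_mem ha.1, fun h => ha.2 (by simpa using inv_mem h)⟩

theorem IsAmalgam.le_altFactor (hA : IsAmalgam G₀ G₁ H) (m : ℕ) : H ≤ altFactor G₀ G₁ m := by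
  unfold altFactor; split
  exacts [hA.le_left, hA.le_right]

theorem AltLetter.mul_left (hA : IsAmalgam G₀ G₁ H) {m : ℕ} {a c : G}
    (ha : AltLetter G₀ G₁ H m a) (hc : c ∈ H) : AltLetter G₀ G₁ H m (c * a) :=
  ⟨mul_mem (hA.le_altFactor m hc) ha.1, fun h => ha.2 (by simpa using mul_mem (inv_mem hc) h)⟩

theorem altWord_nil (j : ℕ) : AltWord G₀ G₁ H j [] := fun _ hi => absurd hi (Nat.not_lt_zero _)

theorem altWord_cons {j : ℕ} {a : G} {w : List G} :
    AltWord G₀ G₁ H j (a :: w) ↔ AltLetter G₀ G₁ H j a ∧ AltWord G₀ G₁ H (j + 1) w := by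
  have hletter : ∀ m (b : G), b ∈ (if m % 2 = 0 then (G₀ : Set G) else G₁) \ (H : Set G) ↔
      AltLetter G₀ G₁ H m b := by
    intro m b; unfold AltLetter altFactor; split_ifs <;> rfl
  simp only [AltWord, List.length_cons, Nat.forall_lt_succ_left', hletter]
  simp [Nat.add_right_comm _ 1 j, Nat.add_assoc]

theorem altWord_singleton {j : ℕ} {a : G} :
    AltWord G₀ G₁ H j [a] ↔ AltLetter G₀ G₁ H j a := by
  simp [altWord_cons, altWord_nil]

theorem AltWord.congr {j j' : ℕ} (h : j % 2 = j' % 2) {w : List G} (hw : AltWord G₀ G₁ H j w) :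
    AltWord G₀ G₁ H j' w := by
  intro i hi
  rw [show (i + j') % 2 = (i + j) % 2 by omega]
  exact hw i hi

theorem altWord_append {j : ℕ} {w v : List G} :
    AltWord G₀ G₁ H j (w ++ v) ↔ AltWord G₀ G₁ H j w ∧ AltWord G₀ G₁ H (j + w.length) v := by
  induction w generalizing j with
  | nil => simp [altWord_nil]
  | cons a w ih =>
    simp only [List.cons_append, altWord_cons, ih, List.length_cons, and_assoc,
      Nat.add_right_comm _ 1, Nat.add_assoc]

theorem AltWord.reverse_inv {j : ℕ} {w : List G} (hw : AltWord G₀ G₁ H j w) :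
    AltWord G₀ G₁ H (j + w.length + 1) (w.reverse.map (·⁻¹)) := by
  induction w generalizing j with
  | nil => exact altWord_nil _
  | cons a w ih =>
    rw [altWord_cons] at hw
    simp only [List.reverse_cons, List.map_append, List.map_reverse, List.map_cons,
      List.map_nil, altWord_append, altWord_singleton] at ih ⊢
    exact ⟨AltWord.congr (by simp; omega) (ih hw.2), hw.1.inv.congr (by simp; omega)⟩

variable (G₀ G₁ H) in
def HasNormalForm (g : G) : Prop :=
  ∃ (j : ℕ) (w : List G), AltWord G₀ G₁ H j w ∧ ∃ h ∈ H, w.prod * h = g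

theorem HasNormalForm.mul_left_of_mem (hA : IsAmalgam G₀ G₁ H) {c g : G} (hc : c ∈ H)
    (hg : HasNormalForm G₀ G₁ H g) : HasNormalForm G₀ G₁ H (c * g) := by
  obtain ⟨j, w, hw, h, hh, rfl⟩ := hg
  cases w with
  | nil => exact ⟨j, [], altWord_nil j, c * h, mul_mem hc hh, by simp⟩
  | cons a w =>
    rw [altWord_cons] at hw
    exact ⟨j, c * a :: w, altWord_cons.2 ⟨hw.1.mul_left hA hc, hw.2⟩, h, hh, by
      simp [mul_assoc]⟩

theorem HasNormalForm.mul_left (hA : IsAmalgam G₀ G₁ H) {k : ℕ} {a g : G}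
    (ha : a ∈ altFactor G₀ G₁ k) (hg : HasNormalForm G₀ G₁ H g) :
    HasNormalForm G₀ G₁ H (a * g) := by
  by_cases haH : a ∈ H
  · exact hg.mul_left_of_mem hA haH
  obtain ⟨j, w, hw, h, hh, rfl⟩ := hg
  cases w with
  | nil => exact ⟨k, [a], altWord_singleton.2 ⟨ha, haH⟩, h, hh, by simp⟩
  | cons b w =>
    rw [altWord_cons] at hw
    by_cases hjk : j % 2 = k % 2
    · have hab : a * b ∈ altFactor G₀ G₁ k := mul_mem ha (hw.1.congr hjk).1
      by_cases habH : a * b ∈ H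
      · have hw' : HasNormalForm G₀ G₁ H (w.prod * h) := ⟨j + 1, w, hw.2, h, hh, rfl⟩
        simpa [mul_assoc] using hw'.mul_left_of_mem hA habH
      · refine ⟨k, a * b :: w, ?_, h, hh, by simp [mul_assoc]⟩
        exact altWord_cons.2 ⟨⟨hab, habH⟩, hw.2.congr (by omega)⟩
    · refine ⟨k, a :: b :: w, ?_, h, hh, by simp [mul_assoc]⟩
      exact altWord_cons.2 ⟨⟨ha, haH⟩, altWord_cons.2
        ⟨hw.1.congr (by omega), hw.2.congr (by omega)⟩⟩

theorem IsAmalgam.hasNormalForm (hA : IsAmalgam G₀ G₁ H) (g : G) : HasNormalForm G₀ G₁ H g := by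
  have hmem : ∀ {a}, a ∈ (G₀ : Set G) ∪ G₁ → ∃ k, a ∈ altFactor G₀ G₁ k := by
    rintro a (ha | ha)
    exacts [⟨0, ha⟩, ⟨1, ha⟩]
  have hg : g ∈ Subgroup.closure ((G₀ : Set G) ∪ G₁) := hA.closure_eq_top ▸ Subgroup.mem_top g
  induction hg using Subgroup.closure_induction_left with
  | one => exact ⟨0, [], altWord_nil 0, 1, H.one_mem, by simp⟩
  | mul_left a ha g _ ih =>
    obtain ⟨k, hk⟩ := hmem ha
    exact ih.mul_left hA hk
  | inv_mul_cancel a ha g _ ih =>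
    obtain ⟨k, hk⟩ := hmem ha
    exact ih.mul_left hA (inv_mem hk)

theorem mem_KK_iff {j : ℕ} {x : G} :
    x ∈ KK G₀ G₁ H j ↔ ∀ w, AltWord G₀ G₁ H j w → w.prod⁻¹ * x * w.prod ∈ H := by
  simp only [KK, CC, TT, Set.mem_iInter]
  constructor
  · intro hx w hw
    by_cases hne : w = []
    · subst hne
      exact hx 0 1 (by simp [H.one_mem])
    · exact hx w.length w.prod (by simpa [hne] using ⟨w, rfl, hw, rfl⟩)
  · intro hx k g hg
    split_ifs at hg with hk
    · have hxH : x ∈ H := by simpa using hx [] (altWord_nil j)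
      exact mul_mem (mul_mem (inv_mem hg) hxH) hg
    · obtain ⟨w, -, hw, rfl⟩ := hg
      exact hx w hw

theorem KK_congr {j j' : ℕ} (h : j % 2 = j' % 2) : KK G₀ G₁ H j = KK G₀ G₁ H j' := by
  ext x
  simp only [mem_KK_iff]
  exact ⟨fun hx w hw => hx w (hw.congr h.symm), fun hx w hw => hx w (hw.congr h)⟩

theorem mem_of_mem_KK {j : ℕ} {x : G} (hx : x ∈ KK G₀ G₁ H j) : x ∈ H := by
  simpa using mem_KK_iff.1 hx [] (altWord_nil j)

theorem one_mem_KK (j : ℕ) : (1 : G) ∈ KK G₀ G₁ H j :=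
  mem_KK_iff.2 fun w _ => by simp

theorem AltLetter.conj_mem_KK {j : ℕ} {s x : G} (hs : AltLetter G₀ G₁ H j s)
    (hx : x ∈ KK G₀ G₁ H j) : s * x * s⁻¹ ∈ KK G₀ G₁ H (j + 1) := by
  refine mem_KK_iff.2 fun w hw => ?_
  simpa [mul_assoc] using mem_KK_iff.1 hx (s⁻¹ :: w) (altWord_cons.2 ⟨hs.inv, hw⟩)

theorem IsAmalgam.conj_mem_or_conj_mem_of_mem_KK (hA : IsAmalgam G₀ G₁ H) {j : ℕ} {x y : G}
    (hx : x ∈ KK G₀ G₁ H j) (hy : y ∈ KK G₀ G₁ H (j + 1)) (g : G) :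
    g * x * g⁻¹ ∈ H ∨ g * y * g⁻¹ ∈ H := by
  obtain ⟨k, w, hw, h, hh, hg⟩ := hA.hasNormalForm g⁻¹
  have hconj : ∀ z, w.prod⁻¹ * z * w.prod ∈ H → g * z * g⁻¹ ∈ H := fun z hz => by
    rw [← inv_inv g, ← hg]
    simpa [mul_assoc] using mul_mem (mul_mem (inv_mem hh) hz) hh
  rcases Nat.mod_two_eq_zero_or_one (k + j) with hkj | hkj
  · exact .inl (hconj x (mem_KK_iff.1 hx w (hw.congr (by omega))))
  · exact .inr (hconj y (mem_KK_iff.1 hy w (hw.congr (by omega))))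

theorem exists_altLetter {m : ℕ} (h : H.relIndex (altFactor G₀ G₁ m) ≠ 1) :
    ∃ s, AltLetter G₀ G₁ H m s := by
  simpa [Subgroup.relIndex_eq_one, SetLike.not_le_iff_exists, AltLetter] using h

theorem IsAmalgam.KK_eq_singleton_one_of_forall_finset (hA : IsAmalgam G₀ G₁ H) {j : ℕ}
    (hj : H.relIndex (altFactor G₀ G₁ j) ≠ 1)
    (hH : ∀ F : Finset G, (F : Set G) ⊆ (H : Set G) \ {1} →
      ∃ g : G, ((fun x => g * x * g⁻¹) '' (F : Set G)) ∩ (H : Set G) = ∅) :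
    KK G₀ G₁ H j = {1} := by
  classical
  refine Set.eq_singleton_iff_unique_mem.2 ⟨one_mem_KK j, fun x hx => ?_⟩
  by_contra hx1
  obtain ⟨s, hs⟩ := exists_altLetter hj
  have hy := hs.conj_mem_KK hx
  have hy1 : s * x * s⁻¹ ≠ 1 := by simpa [mul_inv_eq_one, mul_eq_right] using hx1
  obtain ⟨g, hg⟩ := hH {x, s * x * s⁻¹} <| by
    simp [Set.insert_subset_iff, mem_of_mem_KK hx, mem_of_mem_KK hy, hx1, hy1]
  rcases hA.conj_mem_or_conj_mem_of_mem_KK hx hy g with h | h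
  · exact hg.subset ⟨⟨x, by simp, rfl⟩, h⟩
  · exact hg.subset ⟨⟨s * x * s⁻¹, by simp, rfl⟩, h⟩

theorem IsAmalgam.exists_odd_altWord_prod_eq_of_conj_mem (hA : IsAmalgam G₀ G₁ H) {m : ℕ} {u : List G}
    {y : G} (hu : AltWord G₀ G₁ H m u) (hy : y ∉ H) (hyu : u.prod⁻¹ * y * u.prod ∈ H) :
    ∃ z, AltWord G₀ G₁ H m z ∧ z.length % 2 = 1 ∧ z.prod = y := by
  induction u generalizing m y with
  | nil => exact absurd (by simpa using hyu) hy
  | cons a u ih =>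
    rw [altWord_cons] at hu
    have hyu' : u.prod⁻¹ * (a⁻¹ * y * a) * u.prod ∈ H := by simpa [mul_assoc] using hyu
    by_cases hy' : a⁻¹ * y * a ∈ H
    · have hya : y = a * (a⁻¹ * y * a) * a⁻¹ := by group
      refine ⟨[y], altWord_singleton.2 ⟨?_, hy⟩, rfl, by simp⟩
      rw [hya]
      exact mul_mem (mul_mem hu.1.1 (hA.le_altFactor m hy')) (inv_mem hu.1.1)
    · obtain ⟨z, hz, hzodd, hzy⟩ := ih hu.2 hy' hyu'
      refine ⟨a :: (z ++ [a⁻¹]), ?_, by simp; omega, by simp [hzy, mul_assoc]⟩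
      exact altWord_cons.2 ⟨hu.1, altWord_append.2
        ⟨hz, altWord_singleton.2 (hu.1.inv.congr (by omega))⟩⟩

theorem IsAmalgam.conj_notMem_of_conj_mem (hA : IsAmalgam G₀ G₁ H) {m : ℕ} {u q : List G}
    {y : G} (hu : AltWord G₀ G₁ H m u) (hq : AltWord G₀ G₁ H (m + 1) q) (hy : y ∉ H)
    (hyu : u.prod⁻¹ * y * u.prod ∈ H) : q.prod⁻¹ * y * q.prod ∉ H := by
  obtain ⟨z, hz, hzodd, rfl⟩ := hA.exists_odd_altWord_prod_eq_of_conj_mem hu hy hyu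
  have hW : AltWord G₀ G₁ H (m + 1 + q.length + 1) (q.reverse.map (·⁻¹) ++ (z ++ q)) :=
    altWord_append.2 ⟨hq.reverse_inv, altWord_append.2
      ⟨hz.congr (by simp; omega), hq.congr (by simp; omega)⟩⟩
  have hne : q.reverse.map (·⁻¹) ++ (z ++ q) ≠ [] := by
    rintro h
    simp only [List.append_eq_nil_iff] at h
    simp [h.2.1] at hzodd
  simpa [List.prod_inv_reverse, mul_assoc] using hA.reduced _ _ hne hW

theorem exists_two_altLetters {m : ℕ} (h₁ : H.relIndex (altFactor G₀ G₁ m) ≠ 1)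
    (h₂ : H.relIndex (altFactor G₀ G₁ m) ≠ 2) :
    ∃ s s', AltLetter G₀ G₁ H m s ∧ AltLetter G₀ G₁ H m s' ∧ s⁻¹ * s' ∉ H := by
  by_contra! hno
  obtain ⟨s, hs⟩ := exists_altLetter h₁
  refine h₂ (Subgroup.index_eq_two_iff.2 ⟨⟨s, hs.1⟩, fun b => ?_⟩)
  simp only [Subgroup.mem_subgroupOf, Subgroup.coe_mul]
  by_cases hb : (b : G) ∈ H
  · exact .inr ⟨hb, fun hbs => hs.2 (by simpa using mul_mem (inv_mem hb) hbs)⟩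
  · exact .inl ⟨by simpa using hno _ _ (AltLetter.inv ⟨b.2, hb⟩) hs, hb⟩

theorem Nondegenerate.relIndex_altFactor_ne_one (hnd : Nondegenerate G₀ G₁ H) (m : ℕ) :
    H.relIndex (altFactor G₀ G₁ m) ≠ 1 := by
  unfold altFactor; split
  exacts [hnd.1, hnd.2.1]

theorem Nondegenerate.relIndex_altFactor_succ_ne_two (hnd : Nondegenerate G₀ G₁ H) {m : ℕ}
    (hm : H.relIndex (altFactor G₀ G₁ m) = 2) : H.relIndex (altFactor G₀ G₁ (m + 1)) ≠ 2 := by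
  intro hm'
  unfold altFactor at hm hm'
  split_ifs at hm hm' <;> first | omega | exact hnd.2.2 ⟨‹_›, ‹_›⟩

theorem Nondegenerate.exists_branch (hnd : Nondegenerate G₀ G₁ H) (n : ℕ) :
    ∃ v s s', AltWord G₀ G₁ H n v ∧ AltLetter G₀ G₁ H (n + v.length) s ∧
      AltLetter G₀ G₁ H (n + v.length) s' ∧ s⁻¹ * s' ∉ H := by
  by_cases hn : H.relIndex (altFactor G₀ G₁ n) = 2
  · obtain ⟨s₀, hs₀⟩ := exists_altLetter (hnd.relIndex_altFactor_ne_one n)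
    obtain ⟨s, s', hs, hs', hss'⟩ := exists_two_altLetters
      (hnd.relIndex_altFactor_ne_one (n + 1)) (hnd.relIndex_altFactor_succ_ne_two hn)
    exact ⟨[s₀], s, s', altWord_singleton.2 hs₀, hs, hs', hss'⟩
  · obtain ⟨s, s', hs, hs', hss'⟩ := exists_two_altLetters (hnd.relIndex_altFactor_ne_one n) hn
    exact ⟨[], s, s', altWord_nil n, hs, hs', hss'⟩

theorem KK_eq_singleton_one (h₀ : KK G₀ G₁ H 0 = {1}) (h₁ : KK G₀ G₁ H 1 = {1}) (j : ℕ) :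
    KK G₀ G₁ H j = {1} := by
  rcases Nat.mod_two_eq_zero_or_one j with hj | hj
  · rwa [KK_congr (j' := 0) hj]
  · rwa [KK_congr (j' := 1) hj]

theorem exists_altWord_conj_notMem {j : ℕ} (hK : KK G₀ G₁ H j = {1}) {x : G} (hx : x ≠ 1) :
    ∃ w, AltWord G₀ G₁ H j w ∧ w.prod⁻¹ * x * w.prod ∉ H := by
  by_contra! h
  exact hx (by simpa [hK] using mem_KK_iff.2 h)

theorem IsAmalgam.exists_forall_conj_notMem_of_ne_one (hA : IsAmalgam G₀ G₁ H)
    (hnd : Nondegenerate G₀ G₁ H) (hK : ∀ j, KK G₀ G₁ H j = {1}) {x : G} (hx : x ≠ 1)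
    (g : G) (n : ℕ) :
    ∃ v, AltWord G₀ G₁ H n v ∧ ∀ u, AltWord G₀ G₁ H (n + v.length) u →
      (g * v.prod * u.prod)⁻¹ * x * (g * v.prod * u.prod) ∉ H := by
  obtain ⟨v, s, s', hv, hs, hs', hss'⟩ := hnd.exists_branch n
  set r := g * v.prod * s
  obtain ⟨γ, hγ, hy⟩ := exists_altWord_conj_notMem (hK (n + v.length + 1))
    (x := r⁻¹ * x * r) (by simpa [mul_assoc, inv_mul_eq_one] using hx)
  set y := γ.prod⁻¹ * (r⁻¹ * x * r) * γ.prod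
  -- `y` is `x` seen from the edge `p = r * γ.prod`, which `x` moves. Either `x` moves the whole
  -- half-tree beyond `p`, or by convexity the whole half-tree behind `p`, which contains the
  -- branch through `s'`.
  by_cases hall : ∀ u, AltWord G₀ G₁ H (n + v.length + 1 + γ.length) u →
      u.prod⁻¹ * y * u.prod ∉ H
  · refine ⟨v ++ s :: γ, altWord_append.2 ⟨hv, altWord_cons.2 ⟨hs, hγ⟩⟩, fun u hu => ?_⟩
    convert hall u (hu.congr (by simp; omega)) using 1
    simp [y, r, mul_assoc]
  · push Not at hall
    obtain ⟨u, hu, hyu⟩ := hall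
    refine ⟨v ++ [s'], altWord_append.2 ⟨hv, altWord_singleton.2 hs'⟩, fun u' hu' => ?_⟩
    have hss'_letter : AltLetter G₀ G₁ H (n + v.length) (s⁻¹ * s') :=
      ⟨mul_mem (inv_mem hs.1) hs'.1, hss'⟩
    have hq := altWord_append.2 ⟨hγ.reverse_inv, altWord_cons.2
      ⟨hss'_letter.congr (by simp; omega), hu'.congr (by simp; omega)⟩⟩
    convert hA.conj_notMem_of_conj_mem hu hq hy hyu using 1
    simp [y, r, ← List.prod_inv_reverse, mul_assoc]

theorem IsAmalgam.exists_forall_conj_notMem (hA : IsAmalgam G₀ G₁ H)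
    (hnd : Nondegenerate G₀ G₁ H) (hK : ∀ j, KK G₀ G₁ H j = {1}) (F : Finset G)
    (hF : (1 : G) ∉ F) (g : G) (n : ℕ) :
    ∃ w, AltWord G₀ G₁ H n w ∧ ∀ x ∈ F, (g * w.prod)⁻¹ * x * (g * w.prod) ∉ H := by
  classical
  induction F using Finset.induction_on generalizing g n with
  | empty => exact ⟨[], altWord_nil n, by simp⟩
  | insert x F _ ih =>
    rw [Finset.mem_insert, not_or] at hF
    obtain ⟨v, hv, hxv⟩ :=
      hA.exists_forall_conj_notMem_of_ne_one hnd hK (Ne.symm hF.1) g n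
    obtain ⟨u, hu, hFu⟩ := ih hF.2 (g * v.prod) (n + v.length)
    refine ⟨v ++ u, altWord_append.2 ⟨hv, hu⟩, ?_⟩
    rw [Finset.forall_mem_insert, List.prod_append, ← mul_assoc g]
    exact ⟨hxv u hu, hFu⟩

theorem IsAmalgam.exists_conj_image_inter_eq_empty (hA : IsAmalgam G₀ G₁ H)
    (hnd : Nondegenerate G₀ G₁ H) (hK : ∀ j, KK G₀ G₁ H j = {1}) (F : Finset G)
    (hF : (1 : G) ∉ F) :
    ∃ g : G, ((fun x => g * x * g⁻¹) '' (F : Set G)) ∩ (H : Set G) = ∅ := by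
  obtain ⟨w, -, hw⟩ := hA.exists_forall_conj_notMem hnd hK F hF 1 0
  refine ⟨w.prod⁻¹, Set.eq_empty_iff_forall_notMem.2 ?_⟩
  rintro _ ⟨⟨x, hx, rfl⟩, hxH⟩
  exact hw x hx (by simpa using hxH)

end

/-- Let `G = G₀ *_H G₁` be a nondegenerate free product with amalgamation. Then the
following are equivalent:
(i) `K₀ = K₁ = {e}`;
(ii) for every finite subset `F ⊆ G \ {e}` there exists `g ∈ G` with `g F g⁻¹ ∩ H = ∅`;
(iii) for every finite subset `F ⊆ H \ {e}` there exists `g ∈ G` with `g F g⁻¹ ∩ H = ∅`. -/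
theorem trivial_Ks_tfae {G : Type*} [Group G] (G₀ G₁ H : Subgroup G)
    (ha : IsAmalgam G₀ G₁ H) (hnd : Nondegenerate G₀ G₁ H) :
    List.TFAE
      [ KK G₀ G₁ H 0 = {1} ∧ KK G₀ G₁ H 1 = {1},
        ∀ F : Finset G, (1 : G) ∉ F →
          ∃ g : G, ((fun x => g * x * g⁻¹) '' (F : Set G)) ∩ (H : Set G) = ∅,
        ∀ F : Finset G, (F : Set G) ⊆ (H : Set G) \ {1} →
          ∃ g : G, ((fun x => g * x * g⁻¹) '' (F : Set G)) ∩ (H : Set G) = ∅ ] := by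
  tfae_have 1 → 2 := fun hK =>
    ha.exists_conj_image_inter_eq_empty hnd (KK_eq_singleton_one hK.1 hK.2)
  tfae_have 2 → 3 := fun h F hF => h F fun h1 => (hF h1).2 rfl
  tfae_have 3 → 1 := fun h =>
    ⟨ha.KK_eq_singleton_one_of_forall_finset (hnd.relIndex_altFactor_ne_one 0) h,
      ha.KK_eq_singleton_one_of_forall_finset (hnd.relIndex_altFactor_ne_one 1) h⟩
  tfae_finish
end

section
/- Let G = G₀ *_H G₁ be a nondegenerate free product with amalgamation such that for every finite subset F ⊆ G \ {e} there exists g ∈ G with gFg⁻¹ ∩ H = ∅. Then G is a Powers group and G has the free semigroup property. -/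
variable {G : Type*} [Group G]

/-- A group `G` is a *Powers group* if for every finite subset `F` of `G \ {e}` and every
integer `k ≥ 1` there exist a partition `G = D ⊔ E` and elements `g 1, …, g k ∈ G` such that
`f D ∩ D = ∅` for all `f ∈ F` and `g i E ∩ g j E = ∅` for all distinct `1 ≤ i, j ≤ k`. -/
def IsPowersGroup (G : Type*) [Group G] : Prop :=
  ∀ F : Finset G, (1 : G) ∉ F → ∀ k : ℕ, 1 ≤ k →
    ∃ (D E : Set G) (g : ℕ → G),
      D ∪ E = Set.univ ∧ D ∩ E = ∅ ∧
      (∀ f ∈ F, ((fun x => f * x) '' D) ∩ D = ∅) ∧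
      (∀ i j, 1 ≤ i → i ≤ k → 1 ≤ j → j ≤ k → i ≠ j →
        ((fun x => g i * x) '' E) ∩ ((fun x => g j * x) '' E) = ∅)

/-- A group `G` has the *free semigroup property* if for every finite subset `F` of `G`
there exists `g ∈ G` such that `g F` is semifree: distinct nonempty formal words in the
elements of `g F` define distinct elements of `G`. -/
def HasFreeSemigroupProperty (G : Type*) [Group G] : Prop :=
  ∀ F : Finset G, ∃ g : G,
    ∀ w₁ w₂ : List G, w₁ ≠ [] → w₂ ≠ [] →
      (∀ x ∈ w₁, x ∈ (fun f => g * f) '' (F : Set G)) →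
      (∀ x ∈ w₂, x ∈ (fun f => g * f) '' (F : Set G)) →
      w₁.prod = w₂.prod → w₁ = w₂

/-!
Every element of `G \ H` is the product of a reduced alternating word with letters in `G₀ \ H`
and `G₁ \ H`. The amalgam axioms force two such words with the same product to start in the same
factor, with first letters in the same left coset of `H`.

After possibly swapping the factors, `[G₀ : H] ≥ 3`. A reduced word of odd length starting (and
so ending) in `G₀` maps `H` and the words starting in `G₁` to words starting in `G₀`: this is the
ping-pong behind both conclusions. Every `y ≠ 1` is conjugated into such an odd word by a reduced
word of even length starting in `G₀`: if `y ∈ H`, first by a suffix of a word moving `y` out of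
`H` (given by the hypothesis on conjugates), chosen so that `y` becomes a single letter; then by
letters of `G₀` chosen, using the index bound, to merge with the first or last letter without
cancelling. Conjugating by an even word starting in `G₀` keeps the odd words already obtained odd,
so one conjugator `s` works for a whole finite set.

For the Powers property take `D = s⁻¹(H ∪ W₁)`, `E = s⁻¹W₀`, where `Wⱼ` is the set of words
starting in `Gⱼ`, and the elements `s⁻¹(cb)ⁱ(db)s`, the translates of `E` being told apart by the
first letter after `(cb)ⁱ`. For the free semigroup property conjugate `F \ {1}` and the quotients
`f⁻¹f'` into odd words starting in `G₁`; then the maps `x ↦ ubv · sfs⁻¹ · x` send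
`H ∪ {words starting with u}` into pairwise disjoint sets of words starting with `u`.
-/

theorem eq_of_prod_eq_of_pingpong {M : Type*} [LeftCancelMonoid M] {S Ω : Set M}
    (h1 : (1 : M) ∈ Ω) (hmaps : ∀ e ∈ S, ∀ x ∈ Ω, e * x ∈ Ω)
    (hne : ∀ e ∈ S, ∀ x ∈ Ω, e * x ≠ 1)
    (hdisj : ∀ e ∈ S, ∀ e' ∈ S, ∀ x ∈ Ω, ∀ x' ∈ Ω, e * x = e' * x' → e = e')
    {w₁ w₂ : List M} (hw₁ : ∀ e ∈ w₁, e ∈ S) (hw₂ : ∀ e ∈ w₂, e ∈ S)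
    (h : w₁.prod = w₂.prod) : w₁ = w₂ := by
  have hprod : ∀ w : List M, (∀ e ∈ w, e ∈ S) → w.prod ∈ Ω := by
    intro w hw
    induction w with
    | nil => simpa using h1
    | cons e w ih =>
      obtain ⟨he, hw⟩ := List.forall_mem_cons.1 hw
      exact hmaps e he _ (ih hw)
  induction w₁ generalizing w₂ with
  | nil =>
    cases w₂ with
    | nil => rfl
    | cons e w₂ =>
      obtain ⟨he, hw₂'⟩ := List.forall_mem_cons.1 hw₂
      exact absurd h.symm (hne e he _ (hprod w₂ hw₂'))
  | cons e w₁ ih =>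
    obtain ⟨he, hw₁'⟩ := List.forall_mem_cons.1 hw₁
    cases w₂ with
    | nil => exact absurd h (hne e he _ (hprod w₁ hw₁'))
    | cons e' w₂ =>
      obtain ⟨he', hw₂'⟩ := List.forall_mem_cons.1 hw₂
      rw [List.prod_cons, List.prod_cons] at h
      obtain rfl := hdisj e he e' he' _ (hprod w₁ hw₁') _ (hprod w₂ hw₂') h
      rw [ih hw₁' hw₂' (mul_left_cancel h)]

lemma Subgroup.exists_mem_notMem_mul_notMem {H K : Subgroup G} (h₁ : H.relIndex K ≠ 1)
    (h₂ : H.relIndex K ≠ 2) (t : G) : ∃ x ∈ K, x ∉ H ∧ x * t ∉ H := by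
  by_contra! h
  obtain ⟨a, haK, haH⟩ := SetLike.not_le_iff_exists.1 (mt Subgroup.relIndex_eq_one.2 h₁)
  -- Otherwise `K \ H ⊆ H a`, so `H ⊓ K` has index 2 in `K`.
  refine h₂ (Subgroup.index_eq_two_iff.2 ⟨⟨a⁻¹, inv_mem haK⟩, fun c => ?_⟩)
  simp only [Subgroup.mem_subgroupOf, Subgroup.coe_mul]
  by_cases hc : (c : G) ∈ H
  · exact Or.inr ⟨hc, fun hca => haH (by simpa using mul_mem (inv_mem hc) hca)⟩
  · have := mul_mem (h c c.2 hc) (inv_mem (h a haK haH))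
    exact Or.inl ⟨by simpa [mul_assoc] using this, hc⟩

namespace IsAmalgam

section Words

variable {G₀ G₁ H : Subgroup G} {j k : ℕ} {x : G} {u w : List G}

def factor (G₀ G₁ : Subgroup G) (j : ℕ) : Subgroup G := if j % 2 = 0 then G₀ else G₁

lemma factor_congr (h : j % 2 = k % 2) : factor G₀ G₁ j = factor G₀ G₁ k := by
  simp only [factor, h]

def IsLetter (G₀ G₁ H : Subgroup G) (j : ℕ) (x : G) : Prop :=
  x ∈ factor G₀ G₁ j ∧ x ∉ H

lemma isLetter_iff_mem_diff :
    IsLetter G₀ G₁ H j x ↔ x ∈ (if j % 2 = 0 then (G₀ : Set G) else G₁) \ H := by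
  unfold IsLetter factor
  split_ifs <;> rfl

lemma isLetter_of_even (h : j % 2 = 0) : IsLetter G₀ G₁ H j x ↔ x ∈ G₀ ∧ x ∉ H := by
  simp [isLetter_iff_mem_diff, h]

lemma isLetter_of_odd (h : j % 2 = 1) : IsLetter G₀ G₁ H j x ↔ x ∈ G₁ ∧ x ∉ H := by
  simp [isLetter_iff_mem_diff, h]

lemma IsLetter.congr (hx : IsLetter G₀ G₁ H j x) (h : j % 2 = k % 2) :
    IsLetter G₀ G₁ H k x := by
  rwa [IsLetter, ← factor_congr h]

lemma IsLetter.inv (hx : IsLetter G₀ G₁ H j x) : IsLetter G₀ G₁ H j x⁻¹ :=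
  ⟨inv_mem hx.1, fun h => hx.2 (by simpa using inv_mem h)⟩

def Alternating (G₀ G₁ H : Subgroup G) : ℕ → List G → Prop
  | _, [] => True
  | j, x :: w => IsLetter G₀ G₁ H j x ∧ Alternating G₀ G₁ H (j + 1) w

@[simp] lemma alternating_nil : Alternating G₀ G₁ H j [] := trivial

@[simp] lemma alternating_cons :
    Alternating G₀ G₁ H j (x :: w) ↔ IsLetter G₀ G₁ H j x ∧ Alternating G₀ G₁ H (j + 1) w :=
  Iff.rfl

lemma Alternating.congr (hw : Alternating G₀ G₁ H j w) (h : j % 2 = k % 2) :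
    Alternating G₀ G₁ H k w := by
  induction w generalizing j k with
  | nil => trivial
  | cons x w ih => exact ⟨hw.1.congr h, ih hw.2 (by omega)⟩

lemma alternating_append :
    Alternating G₀ G₁ H j (u ++ w) ↔
      Alternating G₀ G₁ H j u ∧ Alternating G₀ G₁ H (j + u.length) w := by
  induction u generalizing j with
  | nil => simp
  | cons x u ih => simp [ih, and_assoc, Nat.add_right_comm, Nat.add_assoc]

lemma alternating_singleton : Alternating G₀ G₁ H j [x] ↔ IsLetter G₀ G₁ H j x := by simp

lemma Alternating.reverse_inv (hw : Alternating G₀ G₁ H j w) :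
    Alternating G₀ G₁ H (j + w.length + 1) (w.map (·⁻¹)).reverse := by
  induction w generalizing j with
  | nil => trivial
  | cons x w ih =>
    simp only [List.map_cons, List.reverse_cons, alternating_append, alternating_singleton,
      List.length_reverse, List.length_map]
    exact ⟨(ih hw.2).congr (by simp; omega), hw.1.inv.congr (by simp; omega)⟩

lemma Alternating.altWord (hw : Alternating G₀ G₁ H j w) : AltWord G₀ G₁ H j w := by
  induction w generalizing j with
  | nil => intro i hi; simp at hi
  | cons x w ih =>
    rintro (_ | i) hi
    · simpa using isLetter_iff_mem_diff.1 hw.1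
    · simpa [Nat.add_right_comm, Nat.add_assoc] using ih hw.2 i (by simpa using hi)

end Words

section Reduced

variable {G₀ G₁ H : Subgroup G} {j k : ℕ} {b c u v x y z : G}

def Reduced (G₀ G₁ H : Subgroup G) (j : ℕ) (x : G) : Prop :=
  ∃ w, Alternating G₀ G₁ H j w ∧ w ≠ [] ∧ w.prod = x

def OddReduced (G₀ G₁ H : Subgroup G) (j : ℕ) (x : G) : Prop :=
  ∃ w, Alternating G₀ G₁ H j w ∧ Odd w.length ∧ w.prod = x

lemma Reduced.congr (hx : Reduced G₀ G₁ H j x) (h : j % 2 = k % 2) : Reduced G₀ G₁ H k x :=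
  let ⟨w, hw, hne, hp⟩ := hx
  ⟨w, hw.congr h, hne, hp⟩

lemma OddReduced.congr (hx : OddReduced G₀ G₁ H j x) (h : j % 2 = k % 2) :
    OddReduced G₀ G₁ H k x :=
  let ⟨w, hw, hodd, hp⟩ := hx
  ⟨w, hw.congr h, hodd, hp⟩

lemma OddReduced.reduced (hx : OddReduced G₀ G₁ H j x) : Reduced G₀ G₁ H j x :=
  let ⟨w, hw, hodd, hp⟩ := hx
  ⟨w, hw, List.ne_nil_of_length_pos hodd.pos, hp⟩

lemma Reduced.letter_mul (hc : IsLetter G₀ G₁ H j c) (hy : Reduced G₀ G₁ H (j + 1) y) :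
    Reduced G₀ G₁ H j (c * y) :=
  let ⟨w, hw, _, hp⟩ := hy
  ⟨c :: w, ⟨hc, hw⟩, List.cons_ne_nil _ _, by simp [hp]⟩

lemma OddReduced.of_isLetter (hx : IsLetter G₀ G₁ H j x) : OddReduced G₀ G₁ H j x :=
  ⟨[x], alternating_singleton.2 hx, by simp, by simp⟩

lemma OddReduced.conj_letter (hc : IsLetter G₀ G₁ H j c) (hy : OddReduced G₀ G₁ H (j + 1) y) :
    OddReduced G₀ G₁ H j (c * y * c⁻¹) := by
  obtain ⟨w, hw, hodd, rfl⟩ := hy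
  refine ⟨c :: w ++ [c⁻¹], ?_, by simpa [Nat.odd_add_one] using hodd, by simp [mul_assoc]⟩
  rw [alternating_append, alternating_singleton]
  exact ⟨⟨hc, hw⟩, hc.inv.congr (by simp; rcases hodd with ⟨m, hm⟩; omega)⟩

lemma OddReduced.conj_prod {W : List G} (hW : Alternating G₀ G₁ H j W)
    (hy : OddReduced G₀ G₁ H (j + W.length) y) :
    OddReduced G₀ G₁ H j (W.prod * y * W.prod⁻¹) := by
  induction W generalizing j with
  | nil => simpa using hy
  | cons c W ih =>
    have hy' : OddReduced G₀ G₁ H (j + 1 + W.length) y := by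
      simpa [Nat.add_right_comm, Nat.add_assoc] using hy
    simpa [mul_assoc] using OddReduced.conj_letter hW.1 (ih hW.2 hy')

lemma Reduced.pow_mul (hc : IsLetter G₀ G₁ H 0 c) (hb : IsLetter G₀ G₁ H 1 b)
    (hy : Reduced G₀ G₁ H 0 y) (n : ℕ) : Reduced G₀ G₁ H 0 ((c * b) ^ n * y) := by
  induction n with
  | zero => simpa using hy
  | succ n ih =>
    rw [pow_succ', mul_assoc, mul_assoc]
    exact Reduced.letter_mul hc (Reduced.letter_mul hb (ih.congr rfl))

def StartsWith (G₀ G₁ H : Subgroup G) (u x : G) : Prop :=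
  ∃ w, Alternating G₀ G₁ H 0 (u :: w) ∧ u * w.prod = x

lemma StartsWith.reduced (hx : StartsWith G₀ G₁ H u x) : Reduced G₀ G₁ H 0 x :=
  let ⟨w, hw, hp⟩ := hx
  ⟨u :: w, hw, List.cons_ne_nil _ _, hp⟩

lemma startsWith_mul_of_reduced_one (hb : IsLetter G₀ G₁ H 1 b) (hv : IsLetter G₀ G₁ H 0 v)
    (hu : IsLetter G₀ G₁ H 0 u) (hz : Reduced G₀ G₁ H 1 z) :
    StartsWith G₀ G₁ H u (u * b * v * z) := by
  obtain ⟨w, hw, -, rfl⟩ := hz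
  exact ⟨b :: v :: w, ⟨hu, hb, hv.congr rfl, hw.congr rfl⟩, by simp [mul_assoc]⟩

end Reduced

section NormalForm

variable {G₀ G₁ H : Subgroup G} (ha : IsAmalgam G₀ G₁ H) {j k : ℕ} {a b c d g h x y z : G}
  {u v w : List G}
include ha

lemma symm : IsAmalgam G₁ G₀ H where
  le_left := ha.le_right
  le_right := ha.le_left
  inf_eq := by rw [inf_comm, ha.inf_eq]
  closure_eq_top := by rw [Set.union_comm, ha.closure_eq_top]
  reduced j w hne hw := ha.reduced (j + 1) w hne fun i hi => by
    have := hw i hi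
    rcases Nat.mod_two_eq_zero_or_one (i + j) with h | h
    · rw [if_pos h] at this; rwa [if_neg (by omega)]
    · rw [if_neg (by omega)] at this; rwa [if_pos (by omega)]

lemma le_factor (j : ℕ) : H ≤ factor G₀ G₁ j := by
  unfold factor
  split_ifs
  exacts [ha.le_left, ha.le_right]

lemma isLetter_mul_right (hx : IsLetter G₀ G₁ H j x) (hh : h ∈ H) :
    IsLetter G₀ G₁ H j (x * h) :=
  ⟨mul_mem hx.1 (ha.le_factor j hh), fun hm => hx.2 (by simpa using mul_mem hm (inv_mem hh))⟩

lemma isLetter_mul_left (hh : h ∈ H) (hx : IsLetter G₀ G₁ H j x) :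
    IsLetter G₀ G₁ H j (h * x) :=
  ⟨mul_mem (ha.le_factor j hh) hx.1, fun hm => hx.2 (by simpa using mul_mem (inv_mem hh) hm)⟩

lemma prod_notMem (hw : Alternating G₀ G₁ H j w) (hne : w ≠ []) : w.prod ∉ H :=
  ha.reduced j w hne hw.altWord

lemma parity_eq_of_inv_mul_mem (hu : Alternating G₀ G₁ H j u) (hv : Alternating G₀ G₁ H k v)
    (hu0 : u ≠ []) (h : u.prod⁻¹ * v.prod ∈ H) : j % 2 = k % 2 := by
  by_contra hjk
  refine ha.prod_notMem (j := j + u.length + 1) (w := (u.map (·⁻¹)).reverse ++ v) ?_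
    (by simp [hu0]) ?_
  · exact alternating_append.2 ⟨hu.reverse_inv, hv.congr (by simp; omega)⟩
  · simpa [List.prod_inv_reverse] using h

lemma head_inv_mul_mem (hu : Alternating G₀ G₁ H j (a :: u))
    (hv : Alternating G₀ G₁ H j (c :: v)) (h : (a * u.prod)⁻¹ * (c * v.prod) ∈ H) :
    a⁻¹ * c ∈ H := by
  by_contra hac
  have hletter : IsLetter G₀ G₁ H (j + 1 + u.length + 1 + u.length) (a⁻¹ * c) :=
    IsLetter.congr ⟨mul_mem (inv_mem hu.1.1) hv.1.1, hac⟩ (by omega)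
  refine ha.prod_notMem (j := j + 1 + u.length + 1)
    (w := (u.map (·⁻¹)).reverse ++ (a⁻¹ * c) :: v) ?_ (by simp) ?_
  · refine alternating_append.2 ⟨hu.2.reverse_inv, ⟨by simpa using hletter, hv.2.congr ?_⟩⟩
    simp; omega
  · simpa [List.prod_inv_reverse, mul_assoc] using h

lemma notMem_of_reduced (hx : Reduced G₀ G₁ H j x) : x ∉ H := by
  obtain ⟨w, hw, hne, rfl⟩ := hx
  exact ha.prod_notMem hw hne

lemma reduced_disjoint (h₀ : Reduced G₀ G₁ H j x) (h₁ : Reduced G₀ G₁ H (j + 1) x) : False := by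
  obtain ⟨u, hu, hu0, rfl⟩ := h₀
  obtain ⟨v, hv, -, hp⟩ := h₁
  have := ha.parity_eq_of_inv_mul_mem hu hv hu0 (by simp [hp])
  omega

lemma reduced_mul_letter (hy : Reduced G₀ G₁ H j y) (hc : IsLetter G₀ G₁ H (j + 1) c) :
    Reduced G₀ G₁ H j (y * c) := by
  obtain ⟨w, hw, hne, rfl⟩ := hy
  obtain ⟨w, e, rfl⟩ := (List.eq_nil_or_concat' _).resolve_left hne
  obtain ⟨hw, he⟩ := alternating_append.1 hw
  have he := alternating_singleton.1 he
  rcases Nat.even_or_odd w.length with heven | hodd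
  · refine ⟨w ++ [e] ++ [c], alternating_append.2 ⟨alternating_append.2 ⟨hw, ?_⟩, ?_⟩,
      by simp, by simp [mul_assoc]⟩
    · exact alternating_singleton.2 he
    · exact alternating_singleton.2 (hc.congr (by simp; rcases heven with ⟨m, hm⟩; omega))
  have hec : e * c ∈ factor G₀ G₁ (j + w.length) :=
    mul_mem he.1 (hc.congr (k := j + w.length) (by rcases hodd with ⟨m, hm⟩; omega)).1
  by_cases hecH : e * c ∈ H
  · obtain ⟨w, f, rfl⟩ := (List.eq_nil_or_concat' _).resolve_left
      (List.ne_nil_of_length_pos hodd.pos)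
    obtain ⟨hw, hf⟩ := alternating_append.1 hw
    refine ⟨w ++ [f * (e * c)], alternating_append.2 ⟨hw, ?_⟩, by simp, by simp [mul_assoc]⟩
    exact alternating_singleton.2 (ha.isLetter_mul_right (alternating_singleton.1 hf) hecH)
  · exact ⟨w ++ [e * c], alternating_append.2 ⟨hw, alternating_singleton.2 ⟨hec, hecH⟩⟩,
      by simp, by simp [mul_assoc]⟩

lemma mul_mem_or_reduced (hg : g ∈ factor G₀ G₁ k) (hy : y ∈ H ∨ ∃ j, Reduced G₀ G₁ H j y) :
    g * y ∈ H ∨ ∃ j, Reduced G₀ G₁ H j (g * y) := by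
  by_cases hgH : g ∈ H
  · rcases hy with hy | ⟨j, w, hw, hne, rfl⟩
    · exact Or.inl (mul_mem hgH hy)
    · obtain ⟨c, w, rfl⟩ := List.exists_cons_of_ne_nil hne
      exact Or.inr ⟨j, (g * c) :: w, ⟨ha.isLetter_mul_left hgH hw.1, hw.2⟩, by simp,
        by simp [mul_assoc]⟩
  have hg' : IsLetter G₀ G₁ H k g := ⟨hg, hgH⟩
  rcases hy with hy | ⟨j, hy⟩
  · exact Or.inr ⟨k, [g * y], alternating_singleton.2 (ha.isLetter_mul_right hg' hy), by simp,
      by simp⟩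
  by_cases hjk : (k + 1) % 2 = j % 2
  · exact Or.inr ⟨k, Reduced.letter_mul hg' (hy.congr hjk.symm)⟩
  obtain ⟨w, hw, hne, rfl⟩ := hy
  obtain ⟨c, w, rfl⟩ := List.exists_cons_of_ne_nil hne
  have hgc : g * c ∈ factor G₀ G₁ j :=
    mul_mem (by rwa [factor_congr (show j % 2 = k % 2 by omega)]) hw.1.1
  by_cases hgcH : g * c ∈ H
  · rcases w with _ | ⟨d, w⟩
    · exact Or.inl (by simpa using hgcH)
    · exact Or.inr ⟨j + 1, (g * c * d) :: w, ⟨ha.isLetter_mul_left hgcH hw.2.1, hw.2.2⟩,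
        by simp, by simp [mul_assoc]⟩
  · exact Or.inr ⟨j, (g * c) :: w, ⟨⟨hgc, hgcH⟩, hw.2⟩, by simp, by simp [mul_assoc]⟩

lemma mem_or_exists_reduced (x : G) : x ∈ H ∨ ∃ j, Reduced G₀ G₁ H j x := by
  have hfactor : ∀ g ∈ (G₀ : Set G) ∪ G₁, ∃ k, g ∈ factor G₀ G₁ k := by
    rintro g (hg | hg)
    exacts [⟨0, by simpa [factor] using hg⟩, ⟨1, by simpa [factor] using hg⟩]
  have hx : x ∈ Subgroup.closure ((G₀ : Set G) ∪ G₁) := ha.closure_eq_top ▸ Subgroup.mem_top x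
  induction hx using Subgroup.closure_induction_left with
  | one => exact Or.inl (one_mem H)
  | mul_left g hg y _ hy =>
    obtain ⟨k, hk⟩ := hfactor g hg
    exact ha.mul_mem_or_reduced hk hy
  | inv_mul_cancel g hg y _ hy =>
    obtain ⟨k, hk⟩ := hfactor g hg
    exact ha.mul_mem_or_reduced (inv_mem hk) hy

lemma mem_or_reduced (x : G) : x ∈ H ∨ Reduced G₀ G₁ H 0 x ∨ Reduced G₀ G₁ H 1 x := by
  rcases ha.mem_or_exists_reduced x with h | ⟨j, h⟩
  · exact Or.inl h
  · rcases Nat.mod_two_eq_zero_or_one j with hj | hj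
    · exact Or.inr (Or.inl (h.congr hj))
    · exact Or.inr (Or.inr (h.congr hj))

lemma oddReduced_mul (hx : OddReduced G₀ G₁ H j x) (hy : y ∈ H ∨ Reduced G₀ G₁ H (j + 1) y) :
    Reduced G₀ G₁ H j (x * y) := by
  obtain ⟨w, hw, hodd, rfl⟩ := hx
  have hne := List.ne_nil_of_length_pos hodd.pos
  rcases hy with hy | ⟨v, hv, -, rfl⟩
  · obtain ⟨w, e, rfl⟩ := (List.eq_nil_or_concat' _).resolve_left hne
    obtain ⟨hw, he⟩ := alternating_append.1 hw
    refine ⟨w ++ [e * y], alternating_append.2 ⟨hw, alternating_singleton.2 ?_⟩, by simp,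
      by simp [mul_assoc]⟩
    exact ha.isLetter_mul_right (alternating_singleton.1 he) hy
  · refine ⟨w ++ v, alternating_append.2 ⟨hw, hv.congr ?_⟩, by simp [hne], by simp⟩
    rcases hodd with ⟨m, hm⟩
    omega

lemma mul_pow_mul_ne (hc : IsLetter G₀ G₁ H 0 c)
    (hd : IsLetter G₀ G₁ H 0 d) (hdc : d⁻¹ * c ∉ H) (hb : IsLetter G₀ G₁ H 1 b) {i j : ℕ}
    (hij : i < j) (hy : Reduced G₀ G₁ H 0 y) (hz : Reduced G₀ G₁ H 0 z) :
    (c * b) ^ i * (d * b) * y ≠ (c * b) ^ j * (d * b) * z := by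
  obtain ⟨k, rfl⟩ := Nat.exists_eq_add_of_lt hij
  obtain ⟨u, hu, -, rfl⟩ := hy
  obtain ⟨v, hv, -, hvp⟩ :=
    Reduced.pow_mul hc hb (Reduced.letter_mul hd (Reduced.letter_mul hb (hz.congr rfl))) k
  intro h
  have heq : d * (b * u.prod) = c * (b * v.prod) := calc
    d * (b * u.prod) = ((c * b) ^ i)⁻¹ * ((c * b) ^ i * (d * b) * u.prod) := by group
    _ = ((c * b) ^ i)⁻¹ * ((c * b) ^ (i + k + 1) * (d * b) * z) := by rw [h]
    _ = c * (b * v.prod) := by rw [hvp, pow_add, pow_succ']; group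
  refine hdc (ha.head_inv_mul_mem (u := b :: u) (v := b :: v) ⟨hd, hb, hu.congr rfl⟩
    ⟨hc, hb, hv.congr rfl⟩ ?_)
  simp [heq]

lemma startsWith_mul_of_mem_or_startsWith {u v : G} (hb : IsLetter G₀ G₁ H 1 b)
    (hv : IsLetter G₀ G₁ H 0 v) (hu : IsLetter G₀ G₁ H 0 u) (hvu : v * u ∉ H)
    (hx : x ∈ H ∨ StartsWith G₀ G₁ H u x) : StartsWith G₀ G₁ H u (u * b * v * x) := by
  rcases hx with hx | ⟨w, hw, rfl⟩
  · exact ⟨[b, v * x], ⟨hu, hb, (ha.isLetter_mul_right hv hx).congr rfl, trivial⟩,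
      by simp [mul_assoc]⟩
  · have hvu' : IsLetter G₀ G₁ H 2 (v * u) := ⟨mul_mem hv.1 hw.1.1, hvu⟩
    exact ⟨b :: (v * u) :: w, ⟨hu, hb, hvu', hw.2.congr rfl⟩, by simp [mul_assoc]⟩

lemma exists_suffix_conj_isLetter (hy : y ∈ H) {k : ℕ} {V : List G}
    (hV : Alternating G₀ G₁ H k V) (hVy : V.prod * y * V.prod⁻¹ ∉ H) :
    ∃ π ρ, V = π ++ ρ ∧ IsLetter G₀ G₁ H (k + π.length) (ρ.prod * y * ρ.prod⁻¹) := by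
  induction V generalizing k with
  | nil => simp [hy] at hVy
  | cons ℓ V ih =>
    by_cases h : V.prod * y * V.prod⁻¹ ∈ H
    · refine ⟨[], ℓ :: V, rfl, ⟨?_, hVy⟩⟩
      have hℓ := hV.1.1
      have := mul_mem (mul_mem hℓ (ha.le_factor k h)) (inv_mem hℓ)
      simpa [mul_assoc] using this
    · obtain ⟨π, ρ, rfl, hρ⟩ := ih hV.2 h
      exact ⟨ℓ :: π, ρ, rfl, hρ.congr (by simp; omega)⟩

lemma startsWith_mul_conj_mul {s f u v : G} (hb : IsLetter G₀ G₁ H 1 b)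
    (hv : IsLetter G₀ G₁ H 0 v) (hu : IsLetter G₀ G₁ H 0 u) (hvu : v * u ∉ H)
    (hf : f = 1 ∨ OddReduced G₀ G₁ H 1 (s * f * s⁻¹)) (hx : x ∈ H ∨ StartsWith G₀ G₁ H u x) :
    StartsWith G₀ G₁ H u (u * b * v * (s * f * s⁻¹) * x) := by
  rcases hf with rfl | hf
  · simpa [mul_assoc] using ha.startsWith_mul_of_mem_or_startsWith hb hv hu hvu hx
  · simpa [mul_assoc] using startsWith_mul_of_reduced_one hb hv hu
      (ha.oddReduced_mul hf (hx.imp_right fun h => h.reduced.congr rfl))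

section Conjugation

-- `hG₀` is the form in which `[G₀ : H] ≥ 3` is used.
variable (hG₀ : ∀ t : G, ∃ x, IsLetter G₀ G₁ H 0 x ∧ x * t ∉ H)
  (hconj : ∀ F : Finset G, (1 : G) ∉ F →
    ∃ g : G, ((fun x => g * x * g⁻¹) '' (F : Set G)) ∩ (H : Set G) = ∅)
  (hb : IsLetter G₀ G₁ H 1 b)
include hG₀

omit ha in
lemma exists_conj_oddReduced_of_reduced_one (hy : Reduced G₀ G₁ H 1 y) :
    ∃ x, IsLetter G₀ G₁ H 0 x ∧ OddReduced G₀ G₁ H 0 (x * y * x⁻¹) := by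
  obtain ⟨w, hw, hne, rfl⟩ := hy
  obtain ⟨w, e, rfl⟩ := (List.eq_nil_or_concat' _).resolve_left hne
  obtain ⟨hw, he⟩ := alternating_append.1 hw
  have he := alternating_singleton.1 he
  obtain ⟨x, hx, hxe⟩ := hG₀ e⁻¹
  refine ⟨x, hx, ?_⟩
  rcases Nat.even_or_odd w.length with ⟨m, hm⟩ | ⟨m, hm⟩
  · refine ⟨x :: (w ++ [e] ++ [x⁻¹]), ⟨hx, alternating_append.2
      ⟨alternating_append.2 ⟨hw, alternating_singleton.2 he⟩, alternating_singleton.2 ?_⟩⟩,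
      ⟨m + 1, by simp [hm]; omega⟩, by simp [mul_assoc]⟩
    exact hx.inv.congr (by simp; omega)
  · have hex : IsLetter G₀ G₁ H (1 + w.length) (e * x⁻¹) :=
      ⟨mul_mem he.1 (hx.inv.congr (by omega)).1, fun h => hxe (by simpa using inv_mem h)⟩
    exact ⟨x :: (w ++ [e * x⁻¹]), ⟨hx, alternating_append.2 ⟨hw, alternating_singleton.2 hex⟩⟩,
      ⟨m + 1, by simp [hm]; omega⟩, by simp [mul_assoc]⟩

include hconj in
lemma exists_alternating_conj_notMem (hy : y ≠ 1) :
    ∃ k V, Alternating G₀ G₁ H k V ∧ (k + V.length) % 2 = 1 ∧ V.prod * y * V.prod⁻¹ ∉ H := by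
  classical
  obtain ⟨a, ha', -⟩ := hG₀ 1
  -- Moving `a * y * a⁻¹` out of `H` as well lets the conjugating word end in `G₀` in all cases.
  obtain ⟨g, hg⟩ := hconj {y, a * y * a⁻¹} (by simp [eq_comm, hy])
  have hg : ∀ z ∈ ({y, a * y * a⁻¹} : Finset G), g * z * g⁻¹ ∉ H := fun z hz hgz =>
    Set.eq_empty_iff_forall_notMem.1 hg _ ⟨⟨z, hz, rfl⟩, hgz⟩
  have hgy := hg y (by simp)
  have hgay : g * a * y * (g * a)⁻¹ ∉ H := by simpa [mul_assoc] using hg (a * y * a⁻¹) (by simp)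
  rcases ha.mem_or_exists_reduced g with hgH | ⟨j, U, hU, -, rfl⟩
  · exact ⟨0, [g * a], alternating_singleton.2 (ha.isLetter_mul_left hgH ha'), rfl,
      by simpa using hgay⟩
  by_cases hj : (j + U.length) % 2 = 1
  · exact ⟨j, U, hU, hj, hgy⟩
  · refine ⟨j, U ++ [a], alternating_append.2 ⟨hU, alternating_singleton.2 (ha'.congr ?_)⟩,
      by simp; omega, by simpa using hgay⟩
    omega

include hconj in
lemma exists_odd_alternating_conj_reduced (hy : y ≠ 1) :
    ∃ R, Alternating G₀ G₁ H 0 R ∧ Odd R.length ∧ Reduced G₀ G₁ H 0 (R.prod * y * R.prod⁻¹) := by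
  obtain ⟨a, ha', -⟩ := hG₀ 1
  rcases ha.mem_or_reduced y with hyH | ⟨w, hw, hne, rfl⟩ | hy1
  · obtain ⟨k, V, hV, hkV, hVy⟩ := ha.exists_alternating_conj_notMem hG₀ hconj hy
    obtain ⟨π, ρ, rfl, hρ⟩ := ha.exists_suffix_conj_isLetter hyH hV hVy
    have hρalt := (alternating_append.1 hV).2
    simp only [List.length_append] at hkV
    rcases Nat.even_or_odd (k + π.length) with ⟨m, hm⟩ | ⟨m, hm⟩
    · exact ⟨ρ, hρalt.congr (by omega), ⟨ρ.length / 2, by omega⟩,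
        (OddReduced.of_isLetter (hρ.congr (by omega))).reduced⟩
    · refine ⟨a :: ρ, ⟨ha', hρalt.congr (by omega)⟩, ⟨ρ.length / 2, by simp; omega⟩, ?_⟩
      have := OddReduced.conj_letter ha' (OddReduced.of_isLetter (hρ.congr (by omega)))
      simpa [mul_assoc] using this.reduced
  · obtain ⟨y₁, w, rfl⟩ := List.exists_cons_of_ne_nil hne
    rcases eq_or_ne w [] with rfl | hw'
    · exact ⟨[y₁], alternating_singleton.2 hw.1, by simp, [y₁], hw, by simp, by simp⟩
    obtain ⟨q, hq, hqy⟩ := hG₀ y₁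
    have hqy₁ : IsLetter G₀ G₁ H 0 (q * y₁) := ⟨mul_mem hq.1 hw.1.1, hqy⟩
    have := Reduced.letter_mul hqy₁ (ha.reduced_mul_letter ⟨w, hw.2, hw', rfl⟩ hq.inv)
    exact ⟨[q], alternating_singleton.2 hq, by simp, by simpa [mul_assoc] using this⟩
  · have := Reduced.letter_mul ha' (ha.reduced_mul_letter hy1 ha'.inv)
    exact ⟨[a], alternating_singleton.2 ha', by simp, by simpa [mul_assoc] using this⟩

include hconj hb

lemma exists_even_alternating_conj_oddReduced (hy : y ≠ 1) :
    ∃ P, Alternating G₀ G₁ H 0 P ∧ Even P.length ∧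
      OddReduced G₀ G₁ H 0 (P.prod * y * P.prod⁻¹) := by
  obtain ⟨R, hR, ⟨m, hm⟩, hRy⟩ :=
    ha.exists_odd_alternating_conj_reduced hG₀ hconj (y := b * y * b⁻¹) (by simpa using hy)
  obtain ⟨x, hx, hxy⟩ := exists_conj_oddReduced_of_reduced_one hG₀
    (Reduced.letter_mul hb ((ha.reduced_mul_letter (j := 0) hRy hb.inv).congr rfl))
  refine ⟨[x, b] ++ R ++ [b], ?_, ⟨m + 2, by simp [hm]; omega⟩, by simpa [mul_assoc] using hxy⟩
  refine alternating_append.2 ⟨alternating_append.2 ⟨⟨hx, hb, trivial⟩, hR.congr (by simp)⟩,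
    alternating_singleton.2 (hb.congr ?_)⟩
  simp; omega

lemma exists_conj_oddReduced (Y : Finset G) (hY : (1 : G) ∉ Y) :
    ∃ s, ∀ y ∈ Y, OddReduced G₀ G₁ H 0 (s * y * s⁻¹) := by
  classical
  induction Y using Finset.induction_on with
  | empty => exact ⟨1, by simp⟩
  | insert y Y _ ih =>
    obtain ⟨s, hs⟩ := ih (fun h => hY (Finset.mem_insert_of_mem h))
    obtain ⟨P, hP, ⟨m, hm⟩, hPy⟩ := ha.exists_even_alternating_conj_oddReduced hG₀ hconj hb
      (y := s * y * s⁻¹) (by rintro h; exact hY (by simp [show y = 1 by simpa using h]))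
    refine ⟨P.prod * s, fun z hz => ?_⟩
    rcases Finset.mem_insert.1 hz with rfl | hz
    · simpa [mul_assoc] using hPy
    · have := OddReduced.conj_prod hP ((hs z hz).congr (by omega))
      simpa [mul_assoc] using this

lemma exists_conj_oddReduced_one (F : Finset G) :
    ∃ s, (∀ f ∈ F, f ≠ 1 → OddReduced G₀ G₁ H 1 (s * f * s⁻¹)) ∧
      ∀ f ∈ F, ∀ f' ∈ F, f ≠ f' → OddReduced G₀ G₁ H 1 (s * (f⁻¹ * f') * s⁻¹) := by
  classical
  obtain ⟨s, hs⟩ := ha.exists_conj_oddReduced hG₀ hconj hb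
    (((F ×ˢ F).filter (fun p => p.1 ≠ p.2)).image (fun p => p.1⁻¹ * p.2) ∪ F.erase 1)
    (by simp [inv_mul_eq_one])
  have hbs : ∀ y, OddReduced G₀ G₁ H 0 (s * y * s⁻¹) →
      OddReduced G₀ G₁ H 1 (b * s * y * (b * s)⁻¹) := fun y hy => by
    simpa [mul_assoc] using OddReduced.conj_letter hb (hy.congr rfl)
  refine ⟨b * s, fun f hf hf1 => hbs f (hs f (by simp [hf, hf1])), fun f hf f' hf' hff' => ?_⟩
  exact hbs _ (hs _ (Finset.mem_union_left _ (Finset.mem_image.2 ⟨(f, f'), by simp [*]⟩)))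

theorem isPowersGroup : IsPowersGroup G := by
  intro F hF n _
  obtain ⟨s, hs⟩ := ha.exists_conj_oddReduced hG₀ hconj hb F hF
  obtain ⟨c, hc, -⟩ := hG₀ 1
  obtain ⟨d, hd, hdc⟩ := hG₀ c
  refine ⟨{x | s * x ∈ H ∨ Reduced G₀ G₁ H 1 (s * x)}, {x | Reduced G₀ G₁ H 0 (s * x)},
    fun i => s⁻¹ * ((c * b) ^ i * (d⁻¹ * b)) * s, ?_, ?_, fun f hf => ?_,
    fun i j _ _ _ _ hij => ?_⟩
  · refine Set.eq_univ_of_forall fun x => ?_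
    rcases ha.mem_or_reduced (s * x) with h | h | h
    exacts [Or.inl (Or.inl h), Or.inr h, Or.inl (Or.inr h)]
  · refine Set.eq_empty_of_forall_notMem fun x ⟨hD, hE⟩ => ?_
    rcases hD with h | h
    exacts [ha.notMem_of_reduced hE h, ha.reduced_disjoint hE h]
  · refine Set.eq_empty_of_forall_notMem ?_
    rintro _ ⟨⟨x, hx, rfl⟩, hfx⟩
    have hfx' : Reduced G₀ G₁ H 0 (s * (f * x)) := by
      simpa [mul_assoc] using ha.oddReduced_mul (hs f hf) hx
    rcases hfx with h | h
    exacts [ha.notMem_of_reduced hfx' h, ha.reduced_disjoint hfx' h]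
  · refine Set.eq_empty_of_forall_notMem ?_
    rintro _ ⟨⟨x, hx, rfl⟩, ⟨y, hy, hxy⟩⟩
    have hxy' : (c * b) ^ i * (d⁻¹ * b) * (s * x) = (c * b) ^ j * (d⁻¹ * b) * (s * y) := by
      simpa [mul_assoc] using (congrArg (s * ·) hxy).symm
    have hdc' : d⁻¹⁻¹ * c ∉ H := by simpa using hdc
    rcases lt_or_gt_of_ne hij with h | h
    exacts [ha.mul_pow_mul_ne hc hd.inv hdc' hb h hx hy hxy',
      ha.mul_pow_mul_ne hc hd.inv hdc' hb h hy hx hxy'.symm]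

theorem hasFreeSemigroupProperty : HasFreeSemigroupProperty G := by
  intro F
  obtain ⟨u, hu, -⟩ := hG₀ 1
  obtain ⟨v, hv, hvu⟩ := hG₀ u
  obtain ⟨s, hs₁, hs₂⟩ := ha.exists_conj_oddReduced_one hG₀ hconj hb F
  set t : G → G := fun f => u * b * v * (s * f * s⁻¹)
  have ht : ∀ f ∈ F, ∀ x, x ∈ H ∨ StartsWith G₀ G₁ H u x → StartsWith G₀ G₁ H u (t f * x) :=
    fun f hf x hx => ha.startsWith_mul_conj_mul hb hv hu hvu ((em (f = 1)).imp_right (hs₁ f hf)) hx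
  have hword : ∀ w : List G, (∀ e ∈ w, e ∈ (fun f => s⁻¹ * (u * b * v) * s * f) '' (F : Set G)) →
      ∀ e ∈ w.map (MulAut.conj s), e ∈ t '' F := by
    intro w hw _ he
    obtain ⟨e, he', rfl⟩ := List.mem_map.1 he
    obtain ⟨f, hf, rfl⟩ := hw e he'
    exact ⟨f, hf, by simp [t, mul_assoc]⟩
  refine ⟨s⁻¹ * (u * b * v) * s, fun w₁ w₂ _ _ hw₁ hw₂ h => ?_⟩
  refine List.map_injective_iff.2 (MulAut.conj s).injective
    (eq_of_prod_eq_of_pingpong (S := t '' F) (Ω := {x | x ∈ H ∨ StartsWith G₀ G₁ H u x})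
      (Or.inl (one_mem H)) ?_ ?_ ?_ (hword w₁ hw₁) (hword w₂ hw₂)
      (by simp only [← map_list_prod, h]))
  · rintro _ ⟨f, hf, rfl⟩ x hx
    exact Or.inr (ht f hf x hx)
  · rintro _ ⟨f, hf, rfl⟩ x hx h1
    exact ha.notMem_of_reduced (ht f hf x hx).reduced (h1 ▸ one_mem H)
  · rintro _ ⟨f, hf, rfl⟩ _ ⟨f', hf', rfl⟩ x hx x' hx' h
    by_contra hne
    have hff' : f ≠ f' := fun h => hne (h ▸ rfl)
    have hxx' : x = s * (f⁻¹ * f') * s⁻¹ * x' := by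
      calc x = (t f)⁻¹ * (t f * x) := by group
        _ = s * (f⁻¹ * f') * s⁻¹ * x' := by rw [h]; simp only [t]; group
    have hx'' := ha.oddReduced_mul (hs₂ f hf f' hf' hff')
      (hx'.imp_right fun h => h.reduced.congr rfl)
    rw [← hxx'] at hx''
    rcases hx with hx | hx
    exacts [ha.notMem_of_reduced hx'' hx, ha.reduced_disjoint hx.reduced hx'']

end Conjugation

end NormalForm

end IsAmalgam

/-- Let `G = G₀ *_H G₁` be a nondegenerate free product with amalgamation such that for
every finite subset `F ⊆ G \ {e}` there exists `g ∈ G` with `g F g⁻¹ ∩ H = ∅`. Then `G` is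
a Powers group and `G` has the free semigroup property. -/
theorem powers_and_freeSemigroup {G : Type*} [Group G] (G₀ G₁ H : Subgroup G)
    (ha : IsAmalgam G₀ G₁ H) (hnd : Nondegenerate G₀ G₁ H)
    (hconj : ∀ F : Finset G, (1 : G) ∉ F →
      ∃ g : G, ((fun x => g * x * g⁻¹) '' (F : Set G)) ∩ (H : Set G) = ∅) :
    IsPowersGroup G ∧ HasFreeSemigroupProperty G := by
  obtain ⟨h₀, h₁, h₂⟩ := hnd
  wlog h₀₂ : H.relIndex G₀ ≠ 2 generalizing G₀ G₁
  · exact this G₁ G₀ ha.symm h₁ h₀ (fun h => h₂ h.symm) fun h => h₂ ⟨not_not.1 h₀₂, h⟩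
  obtain ⟨b, hb₁, hbH⟩ := SetLike.not_le_iff_exists.1 (mt Subgroup.relIndex_eq_one.2 h₁)
  have hb : IsAmalgam.IsLetter G₀ G₁ H 1 b := (IsAmalgam.isLetter_of_odd rfl).2 ⟨hb₁, hbH⟩
  have hG₀ : ∀ t, ∃ x, IsAmalgam.IsLetter G₀ G₁ H 0 x ∧ x * t ∉ H := fun t => by
    obtain ⟨x, hx, hxH, hxt⟩ := Subgroup.exists_mem_notMem_mul_notMem h₀ h₀₂ t
    exact ⟨x, (IsAmalgam.isLetter_of_even rfl).2 ⟨hx, hxH⟩, hxt⟩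
  exact ⟨ha.isPowersGroup hG₀ hconj hb, ha.hasFreeSemigroupProperty hG₀ hconj hb⟩
end

section
/- Let G = G₀ *_H G₁ be a nondegenerate free product with amalgamation and suppose that the kernel ker G = ⋂_{g ∈ G} gHg⁻¹ is trivial. Then G is a weak* Powers group. -/
variable {G : Type*} [Group G]

/-- A group `G` is a *weak\* Powers group* if for every `f ∈ G \ {e}` and every integer
`k ≥ 1` there exist a partition `G = D ⊔ E` and elements `g 1, …, g k ∈ G` such that
`f D ∩ D = ∅` and `g i E ∩ g j E = ∅` for all distinct `1 ≤ i, j ≤ k`. -/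
def IsWeakStarPowersGroup (G : Type*) [Group G] : Prop :=
  ∀ f : G, f ≠ 1 → ∀ k : ℕ, 1 ≤ k →
    ∃ (D E : Set G) (g : ℕ → G),
      D ∪ E = Set.univ ∧ D ∩ E = ∅ ∧
      ((fun x => f * x) '' D) ∩ D = ∅ ∧
      (∀ i j, 1 ≤ i → i ≤ k → 1 ≤ j → j ≤ k → i ≠ j →
        ((fun x => g i * x) '' E) ∩ ((fun x => g j * x) '' E) = ∅)

/-!
Write `G_β` for the factor in which `H` has at least three cosets, and choose `c₁, c₂ ∈ G_β` in
distinct nontrivial cosets of `H` and `e ∈ G_{!β} \ H`. Since `ker G` is trivial, every `f ≠ 1`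
has a conjugate outside `H`, and by cyclic reduction a conjugate that is either a letter of one
factor or a cyclically reduced word starting in `G_{!β}`. Normal forms give a ping-pong set `E`
for it: `f` maps the complement of `E` into `E`, while the translates of `E` by the products of
the words `(c₁ e)ⁱ c₂ e x` are pairwise disjoint, since the normal forms in the `i`-th translate
begin with `(c₁ e)ⁱ c₂` and no normal form begins with two of these words. Both properties pass
to conjugates, and one set `E` serves every `k`.
-/

def HasPingPongSet (f : G) : Prop :=
  ∃ (E : Set G) (g : ℕ → G), (∀ x ∉ E, f * x ∈ E) ∧
    Pairwise fun i j => Disjoint ((g i * ·) '' E) ((g j * ·) '' E)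

lemma HasPingPongSet.of_conj {f r : G} (h : HasPingPongSet (r⁻¹ * f * r)) :
    HasPingPongSet f := by
  obtain ⟨E, g, hfE, hg⟩ := h
  have himage : ∀ a : G, (a * r⁻¹ * ·) '' ((r * ·) '' E) = (a * ·) '' E := by
    intro a
    rw [Set.image_image]
    simp [mul_assoc]
  refine ⟨(r * ·) '' E, (g · * r⁻¹), fun x hx => ?_, by simpa only [himage] using hg⟩
  have hx' : r⁻¹ * x ∉ E := fun h => hx ⟨_, h, by simp⟩
  exact ⟨_, hfE _ hx', by group⟩

lemma isWeakStarPowersGroup_of_hasPingPongSet (h : ∀ f : G, f ≠ 1 → HasPingPongSet f) :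
    IsWeakStarPowersGroup G := by
  intro f hf k _
  obtain ⟨E, g, hfE, hg⟩ := h f hf
  refine ⟨Eᶜ, E, g, Set.compl_union_self E, Set.compl_inter_self E, ?_,
    fun i j _ _ _ _ hij => (hg hij).inter_eq⟩
  rw [Set.eq_empty_iff_forall_notMem]
  rintro _ ⟨⟨x, hx, rfl⟩, hfx⟩
  exact hfx (hfE x hx)

lemma Subgroup.exists_notMem_of_relIndex_ne {H K : Subgroup G} (h₁ : H.relIndex K ≠ 1)
    (h₂ : H.relIndex K ≠ 2) {x : G} (hx : x ∈ K) : ∃ d ∈ K, d ∉ H ∧ x⁻¹ * d ∉ H := by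
  by_contra! hK
  by_cases hxH : x ∈ H
  · refine h₁ (Subgroup.relIndex_eq_one.2 fun d hd => ?_)
    by_contra hdH
    exact hdH (by simpa using mul_mem hxH (hK d hd hdH))
  · refine h₂ (Subgroup.relIndex_eq_two_iff_exists_notMem_and'.2
      ⟨x⁻¹, inv_mem hx, by simpa using hxH, fun d hd => ?_⟩)
    by_cases hdH : d ∈ H
    exacts [.inr hdH, .inl (hK d hd hdH)]

namespace Amalgam

variable (G₀ G₁ H : Subgroup G)

def factor (b : Bool) : Subgroup G := bif b then G₁ else G₀

inductive Alternating : Bool → List G → Prop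
  | nil (b : Bool) : Alternating b []
  | cons {b : Bool} {x : G} {w : List G} :
      x ∈ factor G₀ G₁ b → x ∉ H → Alternating (!b) w → Alternating b (x :: w)

def startsIn (b : Bool) : Set G :=
  {g | ∃ w, Alternating G₀ G₁ H b w ∧ w ≠ [] ∧ w.prod = g}

variable {G₀ G₁ H}

local notation "Alt" => Alternating G₀ G₁ H

variable {b c : Bool} {u v w : List G} {x y : G}

lemma le_factor (ha : IsAmalgam G₀ G₁ H) (b : Bool) : H ≤ factor G₀ G₁ b := by
  cases b
  exacts [ha.le_left, ha.le_right]

lemma mem_of_mem_factor_of_mem_factor_not (ha : IsAmalgam G₀ G₁ H) (hb : x ∈ factor G₀ G₁ b)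
    (hb' : x ∈ factor G₀ G₁ (!b)) : x ∈ H := by
  rw [← ha.inf_eq]
  cases b
  exacts [⟨hb, hb'⟩, ⟨hb', hb⟩]

lemma eq_of_mem_factor (ha : IsAmalgam G₀ G₁ H) (hb : x ∈ factor G₀ G₁ b)
    (hc : x ∈ factor G₀ G₁ c) (hx : x ∉ H) : b = c := by
  cases b <;> cases c <;>
    first | rfl | exact absurd (mem_of_mem_factor_of_mem_factor_not ha hb hc) hx

namespace Alternating

lemma notMem (h : Alt b w) (hx : x ∈ w) : x ∉ H := by
  induction h with
  | nil => simp at hx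
  | cons _ hyH _ ih =>
    rcases List.mem_cons.1 hx with rfl | hx
    exacts [hyH, ih hx]

lemma of_append_left (h : Alt b (u ++ v)) : Alt b u := by
  induction u generalizing b with
  | nil => exact .nil b
  | cons x u ih =>
    cases h with
    | cons hx hxH h => exact .cons hx hxH (ih h)

lemma exists_mem_factor (h : Alt b w) (hx : x ∈ w) : ∃ c, x ∈ factor G₀ G₁ c := by
  induction h with
  | nil => simp at hx
  | @cons b y _ hy _ _ ih =>
    rcases List.mem_cons.1 hx with rfl | hx
    exacts [⟨b, hy⟩, ih hx]

lemma mul_head (ha : IsAmalgam G₀ G₁ H) (h : Alt b (x :: w)) (hy : y ∈ H) :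
    Alt b ((y * x) :: w) := by
  cases h with
  | cons hx hxH h =>
    refine .cons (mul_mem (le_factor ha b hy) hx) (fun hyx => hxH ?_) h
    simpa using mul_mem (inv_mem hy) hyx

lemma append_of_last (ha : IsAmalgam G₀ G₁ H) (hu : Alt b (u ++ [x]))
    (hx : x ∈ factor G₀ G₁ c) (hw : Alt c (y :: w)) : Alt b (u ++ y :: w) := by
  induction u generalizing b with
  | nil =>
    cases hu with
    | cons hxb hxH _ => rwa [eq_of_mem_factor ha hxb hx hxH]
  | cons z u ih =>
    cases hu with
    | cons hz hzH hu => exact .cons hz hzH (ih hu)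

lemma append_singleton_mul (ha : IsAmalgam G₀ G₁ H) {h : G} (hu : Alt b (u ++ [x]))
    (hh : h ∈ H) : Alt b (u ++ [x * h]) := by
  obtain ⟨c, hx⟩ := hu.exists_mem_factor (x := x) (by simp)
  refine hu.append_of_last ha hx (.cons (mul_mem hx (le_factor ha c hh)) (fun hxh => ?_) (.nil _))
  exact hu.notMem (x := x) (by simp) (by simpa using mul_mem hxh (inv_mem hh))

lemma reverse_inv_append (hv : Alt b v) (hw : Alt (!b) w) :
    ∃ c, Alt c ((v.map (·⁻¹)).reverse ++ w) := by
  induction hv generalizing w with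
  | nil b => exact ⟨!b, hw⟩
  | @cons b x v hx hxH _ ih =>
    have hxw : Alt (!!b) (x⁻¹ :: w) :=
      .cons (by simpa using inv_mem hx) (by simpa using hxH) (by simpa using hw)
    simpa using ih hxw

lemma altWord (h : Alt b w) : AltWord G₀ G₁ H (bif b then 1 else 0) w := by
  induction h with
  | nil => simp [AltWord]
  | @cons b x w hx hxH _ ih =>
    rintro (_ | i) hi
    · cases b <;> exact ⟨hx, hxH⟩
    · have hpar : (i + 1 + (bif b then 1 else 0)) % 2 = (i + (bif !b then 1 else 0)) % 2 := by
        cases b <;> simp; omega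
      simpa [hpar] using ih i (by simpa using hi)

lemma prod_notMem (ha : IsAmalgam G₀ G₁ H) (h : Alt b w) (hne : w ≠ []) : w.prod ∉ H :=
  ha.reduced _ w hne h.altWord

lemma inv_mul_mem_of_cons (ha : IsAmalgam G₀ G₁ H) (hv : Alt b (x :: v)) (hw : Alt c (y :: w))
    (h : (x :: v).prod⁻¹ * (y :: w).prod ∈ H) : x⁻¹ * y ∈ H := by
  by_contra hxy
  obtain ⟨d, u, hu, hne, hprod⟩ : ∃ d u, Alt d u ∧ u ≠ [] ∧
      u.prod = (x :: v).prod⁻¹ * (y :: w).prod := by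
    cases hv with
    | cons hx hxH hv =>
    cases hw with
    | cons hy hyH hw =>
    obtain rfl | rfl : c = b ∨ c = !b := by cases b <;> cases c <;> simp
    · obtain ⟨d, hd⟩ := hv.reverse_inv_append
        (w := (x⁻¹ * y) :: w) (.cons (by simpa using mul_mem (inv_mem hx) hy) hxy (by simpa))
      exact ⟨d, _, hd, by simp, by simp [List.prod_inv_reverse, mul_assoc]⟩
    · obtain ⟨d, hd⟩ := (Alternating.cons hx hxH hv).reverse_inv_append (.cons hy hyH hw)
      exact ⟨d, _, hd, by simp, by simp [List.prod_inv_reverse, mul_assoc]⟩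
  exact hu.prod_notMem ha hne (hprod ▸ h)

/-- Uniqueness of normal forms. The twist `h ∈ H` makes the statement inductive: after the
first letters `x, y` it becomes `x⁻¹ * h * y`. -/
theorem inv_mul_take_prod_mem (ha : IsAmalgam G₀ G₁ H) {h : G} (hv : Alt b v) (hw : Alt c w)
    (hh : h ∈ H) (hvw : v.prod⁻¹ * h * w.prod ∈ H) (p : ℕ) :
    (v.take p).prod⁻¹ * h * (w.take p).prod ∈ H := by
  induction hv generalizing c w h p with
  | nil =>
    obtain rfl : w = [] := by
      by_contra hne
      exact hw.prod_notMem ha hne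
        (by simpa using mul_mem (inv_mem hh) (by simpa using hvw : h * w.prod ∈ H))
    simpa using hh
  | @cons b x v hx hxH hv ih =>
    cases hw with
    | nil =>
      refine absurd ?_ ((Alternating.cons hx hxH hv).prod_notMem ha (List.cons_ne_nil _ _))
      simpa [mul_assoc] using inv_mem (mul_mem hvw (inv_mem hh))
    | @cons c y w hy hyH hw =>
    have hxy : x⁻¹ * (h * y) ∈ H := inv_mul_mem_of_cons ha (.cons hx hxH hv)
      (Alternating.mul_head ha (.cons hy hyH hw) hh) (by simpa [mul_assoc] using hvw)
    cases p with
    | zero => simpa using hh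
    | succ p =>
      simpa [mul_assoc] using ih hw hxy (by simpa [mul_assoc] using hvw) p

end Alternating

section StartsIn

variable {g h : G}

lemma notMem_startsIn_not (ha : IsAmalgam G₀ G₁ H) (hg : g ∈ startsIn G₀ G₁ H b) :
    g ∉ startsIn G₀ G₁ H (!b) := by
  rintro ⟨_ | ⟨y, w⟩, hw, hne, rfl⟩
  · exact hne rfl
  obtain ⟨_ | ⟨x, v⟩, hv, hne', hvw⟩ := hg
  · exact hne' rfl
  cases hv with
  | cons hx hxH hv =>
  cases hw with
  | cons hy hyH hw =>
  have hxy := Alternating.inv_mul_mem_of_cons ha (.cons hx hxH hv) (.cons hy hyH hw)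
    (by simp [hvw])
  exact hyH (mem_of_mem_factor_of_mem_factor_not ha
    (by simpa using mul_mem hx (le_factor ha b hxy)) hy)

lemma mul_mem_startsIn_of_mem (ha : IsAmalgam G₀ G₁ H) (hh : h ∈ H)
    (hg : g ∈ startsIn G₀ G₁ H b) : h * g ∈ startsIn G₀ G₁ H b := by
  obtain ⟨_ | ⟨x, w⟩, hw, hne, rfl⟩ := hg
  · exact absurd rfl hne
  exact ⟨(h * x) :: w, hw.mul_head ha hh, List.cons_ne_nil _ _, by simp [mul_assoc]⟩

lemma mul_mem_startsIn_of_mem_or (ha : IsAmalgam G₀ G₁ H) (hx : x ∈ factor G₀ G₁ b) (hxH : x ∉ H)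
    (hg : g ∈ H ∨ g ∈ startsIn G₀ G₁ H (!b)) : x * g ∈ startsIn G₀ G₁ H b := by
  rcases hg with hg | ⟨w, hw, -, rfl⟩
  · refine ⟨[x * g], .cons (mul_mem hx (le_factor ha b hg)) (fun hxg => hxH ?_) (.nil _),
      List.cons_ne_nil _ _, by simp⟩
    simpa using mul_mem hxg (inv_mem hg)
  · exact ⟨x :: w, .cons hx hxH hw, List.cons_ne_nil _ _, by simp⟩

lemma mul_mem_or_exists_mem_startsIn (ha : IsAmalgam G₀ G₁ H) (hx : x ∈ factor G₀ G₁ b)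
    (hg : g ∈ H ∨ ∃ c, g ∈ startsIn G₀ G₁ H c) :
    x * g ∈ H ∨ ∃ c, x * g ∈ startsIn G₀ G₁ H c := by
  by_cases hxH : x ∈ H
  · rcases hg with hg | ⟨c, hg⟩
    exacts [.inl (mul_mem hxH hg), .inr ⟨c, mul_mem_startsIn_of_mem ha hxH hg⟩]
  by_cases hgb : g ∈ startsIn G₀ G₁ H b
  · obtain ⟨_ | ⟨y, w⟩, hw, hne, rfl⟩ := hgb
    · exact absurd rfl hne
    cases hw with
    | cons hy hyH hw =>
    by_cases hxy : x * y ∈ H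
    · rcases eq_or_ne w [] with rfl | hw'
      · exact .inl (by simpa using hxy)
      · exact .inr ⟨!b, by simpa [mul_assoc] using
          mul_mem_startsIn_of_mem ha hxy ⟨w, hw, hw', rfl⟩⟩
    · exact .inr ⟨b, (x * y) :: w, .cons (mul_mem hx hy) hxy hw, List.cons_ne_nil _ _,
        by simp [mul_assoc]⟩
  refine .inr ⟨b, mul_mem_startsIn_of_mem_or ha hx hxH ?_⟩
  rcases hg with hg | ⟨c, hg⟩
  · exact .inl hg
  · obtain rfl | rfl : c = b ∨ c = !b := by cases b <;> cases c <;> simp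
    exacts [absurd hg hgb, .inr hg]

lemma mem_or_exists_mem_startsIn (ha : IsAmalgam G₀ G₁ H) (g : G) :
    g ∈ H ∨ ∃ b, g ∈ startsIn G₀ G₁ H b := by
  have hmem : ∀ x ∈ (G₀ : Set G) ∪ G₁, ∃ b, x ∈ factor G₀ G₁ b := by
    rintro x (hx | hx)
    exacts [⟨false, hx⟩, ⟨true, hx⟩]
  induction (ha.closure_eq_top ▸ Subgroup.mem_top g : g ∈ Subgroup.closure _)
    using Subgroup.closure_induction_left with
  | one => exact .inl (one_mem H)
  | mul_left x hx y _ ih =>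
    obtain ⟨b, hb⟩ := hmem x hx
    exact mul_mem_or_exists_mem_startsIn ha hb ih
  | inv_mul_cancel x hx y _ ih =>
    obtain ⟨b, hb⟩ := hmem x hx
    exact mul_mem_or_exists_mem_startsIn ha (inv_mem hb) ih

lemma mem_or_mem_startsIn_not (ha : IsAmalgam G₀ G₁ H) (hg : g ∉ startsIn G₀ G₁ H b) :
    g ∈ H ∨ g ∈ startsIn G₀ G₁ H (!b) := by
  rcases mem_or_exists_mem_startsIn ha g with hg' | ⟨c, hc⟩
  · exact .inl hg'
  · obtain rfl | rfl : c = b ∨ c = !b := by cases b <;> cases c <;> simp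
    exacts [absurd hc hg, .inr hc]

lemma mul_mem_startsIn (ha : IsAmalgam G₀ G₁ H) (hx : x ∈ factor G₀ G₁ b) (hxH : x ∉ H)
    (hg : g ∉ startsIn G₀ G₁ H b) : x * g ∈ startsIn G₀ G₁ H b :=
  mul_mem_startsIn_of_mem_or ha hx hxH (mem_or_mem_startsIn_not ha hg)

end StartsIn

variable (G₀ G₁ H) in
def HasPrefix (b : Bool) (u : List G) (g : G) : Prop :=
  ∃ w, w ≠ [] ∧ Alternating G₀ G₁ H b (u ++ w) ∧ (u ++ w).prod = g

namespace HasPrefix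

variable {g : G}

lemma mem_startsIn (h : HasPrefix G₀ G₁ H b u g) : g ∈ startsIn G₀ G₁ H b := by
  obtain ⟨w, hne, hw, rfl⟩ := h
  exact ⟨u ++ w, hw, by simp [hne], rfl⟩

lemma of_append (h : HasPrefix G₀ G₁ H b (u ++ v) g) : HasPrefix G₀ G₁ H b u g := by
  obtain ⟨w, hne, hw, rfl⟩ := h
  exact ⟨v ++ w, by simp [hne], by simpa using hw, by simp⟩

lemma inv_mul_mem (ha : IsAmalgam G₀ G₁ H) (hu : HasPrefix G₀ G₁ H b u g)
    (hv : HasPrefix G₀ G₁ H c v g) (hlen : u.length = v.length) : u.prod⁻¹ * v.prod ∈ H := by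
  obtain ⟨w, -, hw, rfl⟩ := hu
  obtain ⟨w', -, hw', hprod⟩ := hv
  simpa [hlen] using
    Alternating.inv_mul_take_prod_mem ha hw hw' (one_mem H) (by simp [hprod]) u.length

end HasPrefix

lemma hasPrefix_mul (ha : IsAmalgam G₀ G₁ H) {g : G} (hu : Alt b (u ++ [x]))
    (hx : x ∈ factor G₀ G₁ c) (hg : x * g ∈ startsIn G₀ G₁ H c) :
    HasPrefix G₀ G₁ H b u ((u ++ [x]).prod * g) := by
  obtain ⟨_ | ⟨y, w⟩, hw, hne, hprod⟩ := hg
  · exact absurd rfl hne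
  exact ⟨y :: w, List.cons_ne_nil _ _, hu.append_of_last ha hx hw, by
    rw [List.prod_append, hprod]; simp [mul_assoc]⟩

lemma hasPrefix_mul_of_notMem (ha : IsAmalgam G₀ G₁ H) {g : G} (hu : Alt b (u ++ [x]))
    (hx : x ∈ factor G₀ G₁ c) (hg : g ∉ startsIn G₀ G₁ H c) :
    HasPrefix G₀ G₁ H b u ((u ++ [x]).prod * g) :=
  hasPrefix_mul ha hu hx (mul_mem_startsIn ha hx (hu.notMem (by simp)) hg)

def replicatePair (x y : G) (n : ℕ) : List G := (List.replicate n [x, y]).flatten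

lemma Alternating.replicatePair_append (hxy : Alt b [x, y]) (hw : Alt b w) (n : ℕ) :
    Alt b (replicatePair x y n ++ w) := by
  induction n with
  | zero => simpa [replicatePair]
  | succ n ih =>
    cases hxy with
    | cons hx hxH hy =>
    cases hy with
    | cons hy hyH _ =>
    simpa [replicatePair, List.replicate_succ] using
      Alternating.cons hx hxH (.cons hy hyH (by simpa [replicatePair] using ih))

/-- For `i < j` the normal forms of elements of the two translates differ modulo `H` at
position `2 * i`, where one has the letter `c₂` and the other `c₁`. -/
lemma pairwise_disjoint_of_hasPrefix (ha : IsAmalgam G₀ G₁ H) {c₁ c₂ e : G}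
    (hc : c₂⁻¹ * c₁ ∉ H) {E : Set G} {g : ℕ → G}
    (hg : ∀ i, ∀ y ∈ E, HasPrefix G₀ G₁ H b (replicatePair c₁ e i ++ [c₂]) (g i * y)) :
    Pairwise fun i j => Disjoint ((g i * ·) '' E) ((g j * ·) '' E) := by
  have hlt : ∀ i j, i < j → Disjoint ((g i * ·) '' E) ((g j * ·) '' E) := by
    intro i j hij
    obtain ⟨m, rfl⟩ := Nat.exists_eq_add_of_lt hij
    rw [Set.disjoint_left]
    rintro _ ⟨y, hy, rfl⟩ ⟨y', hy', hyy'⟩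
    have h₁ : HasPrefix G₀ G₁ H b (replicatePair c₁ e i ++ [c₁]) (g i * y) := by
      refine HasPrefix.of_append (v := e :: replicatePair c₁ e m ++ [c₂]) ?_
      simpa [← hyy', add_assoc, replicatePair, List.replicate_add, List.replicate_succ]
        using hg (i + m + 1) y' hy'
    exact hc (by simpa [mul_assoc] using (hg i y hy).inv_mul_mem ha h₁ (by simp))
  intro i j hij
  rcases hij.lt_or_gt with h | h
  exacts [hlt i j h, (hlt j i h).symm]

variable (G₀ G₁ H) in
structure SeparatingLetters (β : Bool) (c₁ c₂ e : G) : Prop where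
  c₁_mem : c₁ ∈ factor G₀ G₁ β
  c₂_mem : c₂ ∈ factor G₀ G₁ β
  e_mem : e ∈ factor G₀ G₁ (!β)
  c₁_notMem : c₁ ∉ H
  c₂_notMem : c₂ ∉ H
  e_notMem : e ∉ H
  inv_mul_notMem : c₂⁻¹ * c₁ ∉ H

lemma exists_separatingLetters (hnd : Nondegenerate G₀ G₁ H) :
    ∃ β c₁ c₂ e, SeparatingLetters G₀ G₁ H β c₁ c₂ e := by
  obtain ⟨β, h₁, h₂, hβ⟩ : ∃ β, H.relIndex (factor G₀ G₁ β) ≠ 1 ∧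
      H.relIndex (factor G₀ G₁ β) ≠ 2 ∧ H.relIndex (factor G₀ G₁ (!β)) ≠ 1 := by
    by_cases h : H.relIndex G₀ = 2
    exacts [⟨true, hnd.2.1, fun h' => hnd.2.2 ⟨h, h'⟩, hnd.1⟩, ⟨false, hnd.1, h, hnd.2.1⟩]
  obtain ⟨c₂, hc₂, hc₂H, -⟩ := Subgroup.exists_notMem_of_relIndex_ne h₁ h₂ (one_mem _)
  obtain ⟨c₁, hc₁, hc₁H, hc⟩ := Subgroup.exists_notMem_of_relIndex_ne h₁ h₂ hc₂
  obtain ⟨e, he, heH⟩ := Set.not_subset.1 (mt Subgroup.relIndex_eq_one.2 hβ)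
  exact ⟨β, c₁, c₂, e, ⟨hc₁, hc₂, he, hc₁H, hc₂H, heH, hc⟩⟩

namespace SeparatingLetters

variable {β : Bool} {c₁ c₂ e : G}

lemma alternating_word (hs : SeparatingLetters G₀ G₁ H β c₁ c₂ e) {w : List G} (hw : Alt β w)
    (i : ℕ) : Alt β (replicatePair c₁ e i ++ c₂ :: e :: w) :=
  Alternating.replicatePair_append (.cons hs.c₁_mem hs.c₁_notMem (.cons hs.e_mem hs.e_notMem
    (.nil _))) (.cons hs.c₂_mem hs.c₂_notMem (.cons hs.e_mem hs.e_notMem (by simpa using hw))) i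

/-- `x` is `c₁⁻¹` or `c₂⁻¹`: the element `y` lies in at most one of the cosets `c₁ H ≠ c₂ H`. -/
lemma exists_mul_notMem (hs : SeparatingLetters G₀ G₁ H β c₁ c₂ e) (y : G) :
    ∃ x ∈ factor G₀ G₁ β, x ∉ H ∧ x * y ∉ H := by
  by_cases hy : c₂⁻¹ * y ∈ H
  · refine ⟨c₁⁻¹, inv_mem hs.c₁_mem, by simpa using hs.c₁_notMem, fun h => hs.inv_mul_notMem ?_⟩
    simpa [mul_assoc] using mul_mem hy (inv_mem h)
  · exact ⟨c₂⁻¹, inv_mem hs.c₂_mem, by simpa using hs.c₂_notMem, hy⟩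

lemma hasPrefix_prod_mul (ha : IsAmalgam G₀ G₁ H) (hs : SeparatingLetters G₀ G₁ H β c₁ c₂ e)
    {x g : G} (hx : x ∈ factor G₀ G₁ β) (hxH : x ∉ H) (hg : g ∉ startsIn G₀ G₁ H β) (i : ℕ) :
    HasPrefix G₀ G₁ H β (replicatePair c₁ e i ++ [c₂])
      ((replicatePair c₁ e i ++ [c₂, e, x]).prod * g) := by
  have hu : Alt β ((replicatePair c₁ e i ++ [c₂, e]) ++ [x]) := by
    simpa using hs.alternating_word (.cons hx hxH (.nil _)) i
  have h : HasPrefix G₀ G₁ H β ((replicatePair c₁ e i ++ [c₂]) ++ [e])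
      ((replicatePair c₁ e i ++ [c₂, e, x]).prod * g) := by
    simpa using hasPrefix_mul_of_notMem ha hu hx hg
  exact h.of_append

lemma hasPingPongSet_of_mem_factor (ha : IsAmalgam G₀ G₁ H)
    (hs : SeparatingLetters G₀ G₁ H β c₁ c₂ e) {p : Bool} {f : G} (hf : f ∈ factor G₀ G₁ p)
    (hfH : f ∉ H) : HasPingPongSet f := by
  suffices ∃ g : ℕ → G, ∀ i, ∀ y ∈ startsIn G₀ G₁ H p,
      HasPrefix G₀ G₁ H β (replicatePair c₁ e i ++ [c₂]) (g i * y) by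
    obtain ⟨g, hg⟩ := this
    exact ⟨_, g, fun y hy => mul_mem_startsIn ha hf hfH hy,
      pairwise_disjoint_of_hasPrefix ha hs.inv_mul_notMem hg⟩
  obtain rfl | rfl : p = β ∨ p = !β := by cases p <;> cases β <;> simp
  · refine ⟨fun i => (replicatePair c₁ e i ++ [c₂, e]).prod, fun i y hy => ?_⟩
    have hu : Alt p ((replicatePair c₁ e i ++ [c₂]) ++ [e]) := by
      simpa using hs.alternating_word (.nil p) i
    simpa using hasPrefix_mul_of_notMem ha hu hs.e_mem (notMem_startsIn_not ha hy)
  · refine ⟨fun i => (replicatePair c₁ e i ++ [c₂, e, c₂]).prod, fun i y hy => ?_⟩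
    exact hs.hasPrefix_prod_mul ha hs.c₂_mem hs.c₂_notMem
      (by simpa using notMem_startsIn_not ha hy) i

/-- Besides the elements starting in `G_{!β}`, the ping-pong set contains those whose normal
form starts in the coset `y⁻¹ H`; the letter `x` is chosen so that on these the last letter of
the translating word merges with `y⁻¹ H` into a letter outside `H`. -/
lemma hasPingPongSet_of_cyclicallyReduced (ha : IsAmalgam G₀ G₁ H)
    (hs : SeparatingLetters G₀ G₁ H β c₁ c₂ e) {u : List G} {y : G} (hu : Alt (!β) (u ++ [y]))
    (hy : y ∈ factor G₀ G₁ β) : HasPingPongSet (u ++ [y]).prod := by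
  obtain ⟨x, hx, hxH, hxy⟩ := hs.exists_mul_notMem y⁻¹
  refine ⟨startsIn G₀ G₁ H (!β) ∪ {g | y * g ∉ startsIn G₀ G₁ H β},
    fun i => (replicatePair c₁ e i ++ [c₂, e, x]).prod, fun g hg => ?_,
    pairwise_disjoint_of_hasPrefix (b := β) (e := e) ha hs.inv_mul_notMem fun i g hg => ?_⟩
  · have hyg : y * g ∈ startsIn G₀ G₁ H β := by
      by_contra h
      exact hg (.inr h)
    exact .inl (hasPrefix_mul ha hu hy hyg).mem_startsIn
  · rcases hg with hg | hg
    · exact hs.hasPrefix_prod_mul ha hx hxH (by simpa using notMem_startsIn_not ha hg) i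
    · simpa [mul_assoc] using hs.hasPrefix_prod_mul ha (mul_mem hx (inv_mem hy)) hxy hg i

end SeparatingLetters

lemma exists_shorter_conj (ha : IsAmalgam G₀ G₁ H) (hw : Alt b (x :: u ++ [y]))
    (hy : y ∈ factor G₀ G₁ b) : ∃ c w, Alt c w ∧ w ≠ [] ∧ w.length < u.length + 2 ∧
      w.prod = x⁻¹ * (x :: u ++ [y]).prod * x := by
  cases hw with
  | cons hx hxH hu =>
  by_cases hyx : y * x ∈ H
  · rcases List.eq_nil_or_concat' u with rfl | ⟨u, z, rfl⟩
    · exact absurd (mem_of_mem_factor_of_mem_factor_not ha hy (by cases hu; assumption))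
        (hu.notMem (by simp))
    · refine ⟨!b, u ++ [z * (y * x)], ?_, by simp, by simp, by simp [mul_assoc]⟩
      exact (hu.of_append_left (v := [y]) |>.append_singleton_mul ha hyx)
  · exact ⟨!b, u ++ [y * x], hu.append_of_last ha hy (.cons (mul_mem hy hx) hyx (.nil _)),
      by simp, by simp, by simp [mul_assoc]⟩

theorem hasPingPongSet_prod (ha : IsAmalgam G₀ G₁ H) {β : Bool} {c₁ c₂ e : G}
    (hs : SeparatingLetters G₀ G₁ H β c₁ c₂ e) (hw : Alt b w) (hne : w ≠ []) :
    HasPingPongSet w.prod := by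
  induction hn : w.length using Nat.strong_induction_on generalizing b w with
  | _ n ih =>
  obtain ⟨x, t, rfl⟩ := List.exists_cons_of_ne_nil hne
  rcases List.eq_nil_or_concat' t with rfl | ⟨u, y, rfl⟩
  · cases hw with
    | cons hx hxH _ => simpa using hs.hasPingPongSet_of_mem_factor ha hx hxH
  by_cases hyb : y ∈ factor G₀ G₁ b
  · obtain ⟨c, w', hw', hne', hlen, hprod⟩ := exists_shorter_conj ha hw hyb
    exact .of_conj (r := x) (hprod ▸ ih _ (by simp at hn; omega) hw' hne' rfl)
  cases hw with
  | cons hx hxH hu =>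
  have hy : y ∈ factor G₀ G₁ (!b) := by
    obtain ⟨c, hc⟩ := hu.exists_mem_factor (x := y) (by simp)
    obtain rfl | rfl : c = b ∨ c = !b := by cases b <;> cases c <;> simp
    exacts [absurd hc hyb, hc]
  obtain rfl | rfl : b = !β ∨ b = β := by cases b <;> cases β <;> simp
  · exact hs.hasPingPongSet_of_cyclicallyReduced ha (u := x :: u) (.cons hx hxH hu)
      (by simpa using hy)
  · have hu' : Alt (!b) ((u ++ [y]) ++ [x]) := by
      simpa using hu.append_of_last ha hy
        (.cons hy (hu.notMem (by simp)) (.cons (by simpa using hx) hxH (.nil _)))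
    refine .of_conj (r := x) ?_
    simpa [mul_assoc] using hs.hasPingPongSet_of_cyclicallyReduced ha hu' hx

end Amalgam

open Amalgam in
/-- Let `G = G₀ *_H G₁` be a nondegenerate free product with amalgamation and suppose that
the kernel `ker G = ⋂_{g ∈ G} g H g⁻¹` is trivial. Then `G` is a weak* Powers group. -/
theorem weakStarPowers_of_trivial_kernel {G : Type*} [Group G] (G₀ G₁ H : Subgroup G)
    (ha : IsAmalgam G₀ G₁ H) (hnd : Nondegenerate G₀ G₁ H)
    (hker : amalgamKerSet H = {1}) :
    IsWeakStarPowersGroup G := by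
  obtain ⟨β, c₁, c₂, e, hs⟩ := exists_separatingLetters hnd
  refine isWeakStarPowersGroup_of_hasPingPongSet fun f hf => ?_
  obtain ⟨r, hr⟩ : ∃ r, r⁻¹ * f * r ∉ H := by
    by_contra! h
    have hf' : f ∈ amalgamKerSet H := Set.mem_iInter.2 h
    exact hf (by simpa [hker] using hf')
  obtain hH | ⟨b, w, hw, hne, hprod⟩ := mem_or_exists_mem_startsIn ha (r⁻¹ * f * r)
  · exact absurd hH hr
  · exact .of_conj (hprod ▸ hasPingPongSet_prod ha hs hw hne)
end

section
/- Let N be a normal subgroup of a group G. If G is a weak Powers group, then N is a weak Powers group. -/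
/-- A group `G` is a *weak Powers group* if for every integer `k ≥ 1` and every finite subset
`F` of `G \ {e}` contained in a single nontrivial conjugacy class of `G`, there exist a
partition `G = D ⊔ E` and elements `g 1, …, g k ∈ G` such that `f D ∩ D = ∅` for all `f ∈ F`
and `g i E ∩ g j E = ∅` for all distinct `1 ≤ i, j ≤ k`. -/
def IsWeakPowersGroup (G : Type*) [Group G] : Prop :=
  ∀ F : Finset G, (1 : G) ∉ F → (∃ c : G, c ≠ 1 ∧ ∀ f ∈ F, IsConj c f) → ∀ k : ℕ, 1 ≤ k →
    ∃ (D E : Set G) (g : ℕ → G),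
      D ∪ E = Set.univ ∧ D ∩ E = ∅ ∧
      (∀ f ∈ F, ((fun x => f * x) '' D) ∩ D = ∅) ∧
      (∀ i j, 1 ≤ i → i ≤ k → 1 ≤ j → j ≤ k → i ≠ j →
        ((fun x => g i * x) '' E) ∩ ((fun x => g j * x) '' E) = ∅)

/-- Let `N` be a normal subgroup of a group `G`. If `G` is a weak Powers group,
then `N` is a weak Powers group. -/
theorem weakPowers_of_normal {G : Type*} [Group G] (N : Subgroup G) (hN : N.Normal)
    (hG : IsWeakPowersGroup G) : IsWeakPowersGroup ↥N := by
  classical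
  intro F hF hconj k hk
  obtain ⟨c, hc1, hcconj⟩ := hconj
  have hc1G : (c : G) ≠ 1 := by
    intro h
    exact hc1 (by ext; simpa using h)
  set F' : Finset G := insert (c : G) (F.image Subtype.val) with hF'def
  have h1F' : (1 : G) ∉ F' := by
    simp only [hF'def, Finset.mem_insert, Finset.mem_image, not_or, not_exists]
    refine ⟨fun h => hc1G h.symm, ?_⟩
    intro f
    rintro ⟨hfF, hf1⟩
    apply hF
    have hfe : f = (1 : ↥N) := by ext; simpa using hf1
    rwa [hfe] at hfF
  have hconj' : ∃ d : G, d ≠ 1 ∧ ∀ f ∈ F', IsConj d f := by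
    refine ⟨(c : G), hc1G, ?_⟩
    intro f hf
    rcases Finset.mem_insert.mp hf with rfl | hf
    · exact IsConj.refl _
    · obtain ⟨f₀, hf₀F, rfl⟩ := Finset.mem_image.mp hf
      obtain ⟨u, hu⟩ := isConj_iff.mp (hcconj f₀ hf₀F)
      refine isConj_iff.mpr ⟨(u : G), ?_⟩
      have := congrArg (Subtype.val) hu
      simpa using this
  obtain ⟨D, E, g, hDE, hDEdisj, hfree, hdisj⟩ := hG F' h1F' hconj' (k + 1) (by omega)
  have hcF' : (c : G) ∈ F' := Finset.mem_insert_self _ _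
  have hDc := hfree _ hcF'
  have hDorE : ∀ x : G, x ∈ D ∨ x ∈ E := by
    intro x
    have hx : x ∈ D ∪ E := by rw [hDE]; trivial
    exact hx
  have hcD : ∀ x ∈ D, (c : G) * x ∈ E := by
    intro x hx
    rcases hDorE ((c : G) * x) with h | h
    · exfalso
      have hmem : (c : G) * x ∈ ((fun y => (c : G) * y) '' D) ∩ D := ⟨⟨x, hx, rfl⟩, h⟩
      rw [hDc] at hmem
      exact hmem
    · exact h
  have key : ∀ m, 2 ≤ m → m ≤ k + 1 → ∀ x ∈ E,
      ∃ e ∈ E, ((g 1)⁻¹ * g m) * (c : G) * ((g 1)⁻¹ * g m)⁻¹ * x = (g 1)⁻¹ * (g m * e) := by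
    intro m hm2 hmk x hx
    have hstep1 : (g m)⁻¹ * g 1 * x ∈ D := by
      rcases hDorE ((g m)⁻¹ * g 1 * x) with h | h
      · exact h
      · exfalso
        have hd := hdisj 1 m le_rfl (by omega) (by omega) hmk (by omega)
        have hmem : g 1 * x ∈ ((fun y => g 1 * y) '' E) ∩ ((fun y => g m * y) '' E) := by
          refine ⟨⟨x, hx, rfl⟩, ⟨(g m)⁻¹ * g 1 * x, h, by group⟩⟩
        rw [hd] at hmem
        exact hmem
    refine ⟨(c : G) * ((g m)⁻¹ * g 1 * x), hcD _ hstep1, by group⟩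
  refine ⟨Subtype.val ⁻¹' D, Subtype.val ⁻¹' E,
    fun i => ⟨((g 1)⁻¹ * g (i + 1)) * (c : G) * ((g 1)⁻¹ * g (i + 1))⁻¹,
      hN.conj_mem (c : G) c.2 ((g 1)⁻¹ * g (i + 1))⟩, ?_, ?_, ?_, ?_⟩
  · ext n
    simp only [Set.mem_union, Set.mem_preimage, Set.mem_univ, iff_true]
    exact hDorE (n : G)
  · rw [Set.eq_empty_iff_forall_notMem]
    rintro n ⟨h1, h2⟩
    have hmem : (n : G) ∈ D ∩ E := ⟨h1, h2⟩
    rw [hDEdisj] at hmem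
    exact hmem
  · intro f hfF
    rw [Set.eq_empty_iff_forall_notMem]
    rintro x ⟨⟨a, haD, rfl⟩, hxD⟩
    have hfF' : (f : G) ∈ F' := by
      rw [hF'def]
      exact Finset.mem_insert_of_mem (Finset.mem_image_of_mem _ hfF)
    have hmem : ((f * a : ↥N) : G) ∈ ((fun y => (f : G) * y) '' D) ∩ D := by
      refine ⟨⟨(a : G), haD, by push_cast; ring_nf⟩, hxD⟩
    rw [hfree _ hfF'] at hmem
    exact hmem
  · intro i j h1i hik h1j hjk hij
    rw [Set.eq_empty_iff_forall_notMem]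
    rintro x ⟨⟨a, haE, hxa⟩, ⟨b, hbE, hxb⟩⟩
    obtain ⟨e, heE, he⟩ := key (i + 1) (by omega) (by omega) (a : G) haE
    obtain ⟨e', he'E, he'⟩ := key (j + 1) (by omega) (by omega) (b : G) hbE
    have hxa' : (x : G) = ((g 1)⁻¹ * g (i + 1)) * (c : G) * ((g 1)⁻¹ * g (i + 1))⁻¹ * (a : G) := by
      rw [← hxa]; push_cast; ring_nf
    have hxb' : (x : G) = ((g 1)⁻¹ * g (j + 1)) * (c : G) * ((g 1)⁻¹ * g (j + 1))⁻¹ * (b : G) := by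
      rw [← hxb]; push_cast; ring_nf
    have heq : g (i + 1) * e = g (j + 1) * e' := by
      have h1 : (g 1)⁻¹ * (g (i + 1) * e) = (g 1)⁻¹ * (g (j + 1) * e') := by
        rw [← he, ← he', ← hxa', ← hxb']
      exact mul_left_cancel h1
    have hd := hdisj (i + 1) (j + 1) (by omega) (by omega) (by omega) (by omega) (by omega)
    have hmem : g (i + 1) * e ∈ ((fun y => g (i + 1) * y) '' E) ∩ ((fun y => g (j + 1) * y) '' E) :=
      ⟨⟨e, heE, rfl⟩, ⟨e', he'E, heq.symm⟩⟩
    rw [hd] at hmem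
    exact hmem
end

section
/- Let X be a class of groups satisfying condition (i), i.e., ρ(G) ∈ X for every group G. Then X is closed under normal subgroups if and only if for every group G and every normal subgroup N of G one has ρ(N) = ρ(G) ∩ N. In particular, when X is closed under normal subgroups, ρ(N) is a normal subgroup of G for every normal subgroup N of G. -/
universe u

/-- `X` is a *class of groups*: it contains the trivial group and is closed under
isomorphism. -/
def IsGroupClass (X : (G : Type u) → [Group G] → Prop) : Prop :=
  (∀ (G : Type u) [Group G], Subsingleton G → X G) ∧
  (∀ (G H : Type u) [Group G] [Group H], (G ≃* H) → X G → X H)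

/-- `ρ(G)`: the subgroup of `G` generated by all normal subgroups of `G` belonging to `X`. -/
def rho (X : (G : Type u) → [Group G] → Prop) (G : Type u) [Group G] : Subgroup G :=
  sSup {N : Subgroup G | N.Normal ∧ X ↥N}

/-- Condition (i): `ρ(G) ∈ X` for every group `G`. -/
def SatisfiesCondI (X : (G : Type u) → [Group G] → Prop) : Prop :=
  ∀ (G : Type u) [Group G], X ↥(rho X G)

/-- `X` is closed under normal subgroups. -/
def ClosedUnderNormalSubgroups (X : (G : Type u) → [Group G] → Prop) : Prop :=
  ∀ (G : Type u) [Group G], X G → ∀ N : Subgroup G, N.Normal → X ↥N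

lemma le_rho (X : (G : Type u) → [Group G] → Prop) {G : Type u} [Group G]
    {N : Subgroup G} (hN : N.Normal) (hXN : X ↥N) : N ≤ rho X G :=
  le_sSup ⟨hN, hXN⟩

lemma rho_map_le (X : (G : Type u) → [Group G] → Prop)
    (hclass : IsGroupClass X) {G H : Type u} [Group G] [Group H] (e : G ≃* H) :
    Subgroup.map e.toMonoidHom (rho X G) ≤ rho X H := by
  rw [(Subgroup.gc_map_comap e.toMonoidHom).le_iff_le]
  refine sSup_le fun K hK => ?_
  rw [← (Subgroup.gc_map_comap e.toMonoidHom).le_iff_le]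
  refine le_rho X (hK.1.map e.toMonoidHom e.surjective) ?_
  exact hclass.2 _ _ (Subgroup.equivMapOfInjective K e.toMonoidHom e.injective) hK.2

lemma rho_normal (X : (G : Type u) → [Group G] → Prop)
    (hclass : IsGroupClass X) (G : Type u) [Group G] : (rho X G).Normal := by
  constructor
  intro n hn g
  have h := rho_map_le X hclass (MulAut.conj g : G ≃* G)
  exact h ⟨n, hn, rfl⟩

lemma rho_top (X : (G : Type u) → [Group G] → Prop)
    (hclass : IsGroupClass X) {G : Type u} [Group G] (hG : X G) : rho X G = ⊤ :=
  top_unique (le_rho X inferInstance (hclass.2 _ _ Subgroup.topEquiv.symm hG))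

/-- Let `X` be a class of groups satisfying condition (i), i.e. `ρ(G) ∈ X` for every group
`G`. Then `X` is closed under normal subgroups if and only if for every group `G` and every
normal subgroup `N` of `G` one has `ρ(N) = ρ(G) ∩ N`. In particular, when `X` is closed
under normal subgroups, `ρ(N)` is a normal subgroup of `G` for every normal subgroup `N`. -/
theorem rho_inter_of_closedUnderNormal (X : (G : Type u) → [Group G] → Prop)
    (hclass : IsGroupClass X) (hI : SatisfiesCondI X) :
    (ClosedUnderNormalSubgroups X ↔
      ∀ (G : Type u) [Group G] (N : Subgroup G), N.Normal →
        Subgroup.map N.subtype (rho X ↥N) = rho X G ⊓ N) ∧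
    (ClosedUnderNormalSubgroups X →
      ∀ (G : Type u) [Group G] (N : Subgroup G), N.Normal →
        (Subgroup.map N.subtype (rho X ↥N)).Normal) := by
  have main : ClosedUnderNormalSubgroups X ↔
      ∀ (G : Type u) [Group G] (N : Subgroup G), N.Normal →
        Subgroup.map N.subtype (rho X ↥N) = rho X G ⊓ N := by
    constructor
    · intro hcl G _ N hN
      refine le_antisymm (le_inf ?_ (Subgroup.map_subtype_le _)) ?_
      · -- image of ρ(N) is a normal X-subgroup of G
        have hXM : X ↥(Subgroup.map N.subtype (rho X ↥N)) :=
          hclass.2 _ _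
            (Subgroup.equivMapOfInjective (rho X ↥N) N.subtype N.subtype_injective) (hI ↥N)
        have hMnorm : (Subgroup.map N.subtype (rho X ↥N)).Normal := by
          constructor
          rintro _ ⟨n, hn, rfl⟩ g
          have h := rho_map_le X hclass ((MulAut.conjNormal g : MulAut ↥N) : ↥N ≃* ↥N)
          have hmem : MulAut.conjNormal g n ∈ rho X ↥N := h ⟨n, hn, rfl⟩
          refine ⟨MulAut.conjNormal g n, hmem, ?_⟩
          simp [MulAut.conjNormal_apply]
        exact le_rho X hMnorm hXM
      · -- ρ(G) ⊓ N ≤ image of ρ(N)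
        have hR : (rho X G).Normal := rho_normal X hclass G
        have hRN : (rho X G ⊓ N).Normal := by haveI := hR; haveI := hN; exact Subgroup.normal_inf_normal _ _
        -- (ρ(G) ⊓ N) as a subgroup of ρ(G) is normal and in X
        have hK0 : ((rho X G ⊓ N).subgroupOf (rho X G)).Normal := hRN.comap _
        have hXK0 : X ↥((rho X G ⊓ N).subgroupOf (rho X G)) := hcl _ (hI G) _ hK0
        have hXK1 : X ↥((rho X G ⊓ N).subgroupOf N) :=
          hclass.2 _ _
            ((Subgroup.subgroupOfEquivOfLe inf_le_left).trans
              (Subgroup.subgroupOfEquivOfLe inf_le_right).symm) hXK0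
        have hK1 : ((rho X G ⊓ N).subgroupOf N).Normal := hRN.comap _
        have hle : (rho X G ⊓ N).subgroupOf N ≤ rho X ↥N := le_rho X hK1 hXK1
        calc rho X G ⊓ N = ((rho X G ⊓ N).subgroupOf N).map N.subtype := by
              rw [Subgroup.subgroupOf_map_subtype, inf_eq_left.mpr inf_le_right]
          _ ≤ (rho X ↥N).map N.subtype := Subgroup.map_mono hle
    · intro h G _ hG N hN
      have h1 := h G N hN
      rw [rho_top X hclass hG, top_inf_eq] at h1
      have h2 : rho X ↥N = ⊤ := by
        apply Subgroup.map_injective N.subtype_injective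
        rw [h1, ← MonoidHom.range_eq_map, Subgroup.range_subtype]
      have h3 := hI ↥N
      rw [h2] at h3
      exact hclass.2 _ _ Subgroup.topEquiv h3
  refine ⟨main, fun hcl G _ N hN => ?_⟩
  rw [main.mp hcl G N hN]
  exact by haveI := rho_normal X hclass G; haveI := hN; exact Subgroup.normal_inf_normal _ _
end

section
/- Let X be a class of groups that satisfies condition (i) and is closed under normal subgroups. Assume that G is any group and N is a normal subgroup of G such that ρ(N) = {e}. Then ρ(G) = ρ(Z_G(N)). -/
universe u

/-- `rho X G` is a characteristic subgroup of `G`. -/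
lemma rho_characteristic (X : (G : Type u) → [Group G] → Prop)
    (hclass : IsGroupClass X) (G : Type u) [Group G] :
    (rho X G).Characteristic := by
  refine Subgroup.characteristic_iff_le_comap.mpr fun φ => ?_
  rw [rho]
  refine sSup_le fun M hM x hx => ?_
  have hmap : (M.map φ.toMonoidHom) ∈ {N : Subgroup G | N.Normal ∧ X ↥N} :=
    ⟨hM.1.map _ φ.surjective, hclass.2 _ _ (φ.subgroupMap M) hM.2⟩
  exact Subgroup.mem_comap.mpr (le_sSup hmap ⟨x, hx, rfl⟩)

/-- Let `X` be a class of groups that satisfies condition (i) and is closed under normal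
subgroups. Assume that `G` is any group and `N` is a normal subgroup of `G` such that
`ρ(N) = {e}`. Then `ρ(G) = ρ(Z_G(N))` (as subgroups of `G`). -/
theorem rho_eq_rho_centralizer (X : (G : Type u) → [Group G] → Prop)
    (hclass : IsGroupClass X) (hI : SatisfiesCondI X)
    (hnorm : ClosedUnderNormalSubgroups X)
    (G : Type u) [Group G] (N : Subgroup G) (hN : N.Normal)
    (htriv : rho X ↥N = ⊥) :
    rho X G =
      Subgroup.map (Subgroup.centralizer (N : Set G)).subtype
        (rho X ↥(Subgroup.centralizer (N : Set G))) := by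
  set C := Subgroup.centralizer (N : Set G) with hCdef
  haveI hCnormal : C.Normal := by
    constructor
    intro c hc g
    rw [hCdef, Subgroup.mem_centralizer_iff] at hc ⊢
    intro h hh
    have h' : g⁻¹ * h * g ∈ N := by simpa [mul_assoc] using hN.conj_mem h hh g⁻¹
    have hcomm := hc _ h'
    calc h * (g * c * g⁻¹) = g * ((g⁻¹ * h * g) * c) * g⁻¹ := by group
      _ = g * (c * (g⁻¹ * h * g)) * g⁻¹ := by rw [hcomm]
      _ = (g * c * g⁻¹) * h := by group
  haveI hchar : (rho X ↥C).Characteristic := rho_characteristic X hclass _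
  haveI hGchar : (rho X G).Characteristic := rho_characteristic X hclass G
  haveI hRnorm : (rho X G).Normal := inferInstance
  apply le_antisymm
  · -- rho X G ≤ map C.subtype (rho X C)
    set R := rho X G with hRdef
    have hRX : X ↥R := hI G
    -- R ⊓ N = ⊥
    have hRN : R ⊓ N = ⊥ := by
      have hRNnorm : (R ⊓ N).Normal := Subgroup.normal_inf_normal R N
      have hTX : X ↥((R ⊓ N).subgroupOf R) :=
        hnorm ↥R hRX _ (hRNnorm.subgroupOf R)
      have hRNX : X ↥(R ⊓ N) :=
        hclass.2 _ _ (Subgroup.subgroupOfEquivOfLe inf_le_left) hTX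
      have hSX : X ↥((R ⊓ N).subgroupOf N) :=
        hclass.2 _ _ (Subgroup.subgroupOfEquivOfLe inf_le_right).symm hRNX
      have hS : (R ⊓ N).subgroupOf N ≤ rho X ↥N :=
        le_sSup ⟨hRNnorm.subgroupOf N, hSX⟩
      rw [htriv, le_bot_iff, Subgroup.subgroupOf_eq_bot] at hS
      exact hS.eq_bot_of_le inf_le_right
    -- R centralizes N
    have hRC : R ≤ C := by
      rw [hCdef, ← Subgroup.commutator_eq_bot_iff_le_centralizer, ← le_bot_iff, ← hRN]
      exact Subgroup.commutator_le_inf R N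
    have hRCX : X ↥(R.subgroupOf C) :=
      hclass.2 _ _ (Subgroup.subgroupOfEquivOfLe hRC).symm hRX
    have hle : R.subgroupOf C ≤ rho X ↥C :=
      le_sSup ⟨hRnorm.subgroupOf C, hRCX⟩
    calc R = (R.subgroupOf C).map C.subtype := by
            rw [Subgroup.subgroupOf_map_subtype, inf_eq_left.mpr hRC]
      _ ≤ (rho X ↥C).map C.subtype := Subgroup.map_mono hle
  · -- map C.subtype (rho X C) ≤ rho X G
    have hPnorm : ((rho X ↥C).map C.subtype).Normal :=
      ConjAct.normal_of_characteristic_of_normal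
    have hPX : X ↥((rho X ↥C).map C.subtype) :=
      hclass.2 _ _ ((rho X ↥C).equivMapOfInjective C.subtype C.subtype_injective)
        (hI ↥C)
    exact le_sSup ⟨hPnorm, hPX⟩
end

section
/- Let X be a class of groups that satisfies condition (i), is closed under normal subgroups, and contains all abelian groups. Assume that G is any group and N is a normal subgroup of G such that both ρ(N) and ρ(G/N) are trivial. Then ρ(G) = {e}. -/
universe u

/-! Put `R = ρ(G)`, which lies in `X` by condition (i). Then `R ∩ N` is a normal `X`-subgroup of `N`,
hence trivial, so `R` maps isomorphically onto a normal `X`-subgroup of `G/N`, which is trivial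
too. Thus `R ≤ N` and `R = R ∩ N = 1`. -/

section

variable {X : (G : Type u) → [Group G] → Prop}

instance rho_normal_s16 (G : Type u) [Group G] : (rho X G).Normal where
  conj_mem n hn g := by
    have key : rho X G ≤ (rho X G).comap (MulAut.conj g).toMonoidHom := by
      refine sSup_le fun M hM x hx ↦ ?_
      exact le_sSup hM (hM.1.conj_mem x hx g)
    simpa using key hn

theorem le_rho_s16 {G : Type u} [Group G] {M : Subgroup G} [hM : M.Normal] (hX : X M) :
    M ≤ rho X G :=
  le_sSup ⟨hM, hX⟩

theorem ClosedUnderNormalSubgroups.inf (hclass : IsGroupClass X)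
    (hnorm : ClosedUnderNormalSubgroups X) {G : Type u} [Group G] {M : Subgroup G} (hM : X M)
    (N : Subgroup G) [N.Normal] : X ↥(M ⊓ N) :=
  hclass.2 _ _
    ((MulEquiv.subgroupCongr (Subgroup.inf_subgroupOf_left N M).symm).trans
      (Subgroup.subgroupOfEquivOfLe inf_le_left))
    (hnorm M hM (N.subgroupOf M) inferInstance)

theorem subgroupOf_le_rho (hclass : IsGroupClass X) (hnorm : ClosedUnderNormalSubgroups X)
    {G : Type u} [Group G] {M : Subgroup G} [M.Normal] (hM : X M) (N : Subgroup G) [N.Normal] :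
    M.subgroupOf N ≤ rho X N :=
  le_rho_s16 <| hclass.2 _ _
    ((Subgroup.subgroupOfEquivOfLe inf_le_right).symm.trans
      (MulEquiv.subgroupCongr (Subgroup.inf_subgroupOf_right M N)))
    (hnorm.inf hclass hM N)

theorem disjoint_of_rho_eq_bot (hclass : IsGroupClass X) (hnorm : ClosedUnderNormalSubgroups X)
    {G : Type u} [Group G] {M : Subgroup G} [M.Normal] (hM : X M) {N : Subgroup G} [N.Normal]
    (hN : rho X N = ⊥) : Disjoint M N := by
  have := subgroupOf_le_rho hclass hnorm hM N
  rwa [hN, le_bot_iff, Subgroup.subgroupOf_eq_bot] at this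

theorem map_le_rho (hclass : IsGroupClass X) {G H : Type u} [Group G] [Group H] {f : G →* H}
    (hf : Function.Surjective f) {M : Subgroup G} [M.Normal] (hM : X M)
    (hker : Disjoint M f.ker) : M.map f ≤ rho X H :=
  have hinj : Function.Injective (f.subgroupMap M) := by
    rw [← MonoidHom.ker_eq_bot_iff, Subgroup.ker_subgroupMap, Subgroup.subgroupOf_eq_bot]
    exact hker.symm
  have : (M.map f).Normal := Subgroup.Normal.map inferInstance f hf
  le_rho_s16 <| hclass.2 _ _ (MulEquiv.ofBijective _ ⟨hinj, f.subgroupMap_surjective M⟩) hM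

end

theorem rho_eq_bot_of_rho_eq_bot_general (X : (G : Type u) → [Group G] → Prop)
    (hclass : IsGroupClass X) (hI : SatisfiesCondI X)
    (hnorm : ClosedUnderNormalSubgroups X)
    (G : Type u) [Group G] (N : Subgroup G) [N.Normal]
    (h1 : rho X ↥N = ⊥) (h2 : rho X (G ⧸ N) = ⊥) :
    rho X G = ⊥ := by
  have hdisj : Disjoint (rho X G) N := disjoint_of_rho_eq_bot hclass hnorm (hI G) h1
  have hle : rho X G ≤ N := by
    have := map_le_rho hclass (QuotientGroup.mk'_surjective N) (hI G)
      (by rwa [QuotientGroup.ker_mk'])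
    rwa [h2, le_bot_iff, Subgroup.map_eq_bot_iff, QuotientGroup.ker_mk'] at this
  exact disjoint_self.mp (hdisj.mono_right hle)

/-- Let `X` be a class of groups that satisfies condition (i), is closed under normal
subgroups, and contains all abelian groups. Assume that `G` is any group and `N` is a normal
subgroup of `G` such that both `ρ(N)` and `ρ(G/N)` are trivial. Then `ρ(G) = {e}`. -/
theorem rho_eq_bot_of_rho_eq_bot (X : (G : Type u) → [Group G] → Prop)
    (hclass : IsGroupClass X) (hI : SatisfiesCondI X)
    (hnorm : ClosedUnderNormalSubgroups X)
    (habelian : ∀ (G : Type u) [Group G], (∀ a b : G, a * b = b * a) → X G)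
    (G : Type u) [Group G] (N : Subgroup G) [N.Normal]
    (h1 : rho X ↥N = ⊥) (h2 : rho X (G ⧸ N) = ⊥) :
    rho X G = ⊥ :=
  rho_eq_bot_of_rho_eq_bot_general X hclass hI hnorm G N h1 h2
end

section
/- Let X be a residual class of groups, and suppose that the class X_* is closed under normal subgroups and contains all abelian groups. Let G be any group and N a normal subgroup of G. Then G belongs to X if and only if both N and the centralizer Z_G(N) belong to X. -/
universe u

/-- `G/N ∈ X`, packaged with the normality of `N` needed to form the quotient group. -/
def QuotMem (X : (G : Type u) → [Group G] → Prop) (G : Type u) [Group G]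
    (N : Subgroup G) : Prop :=
  ∃ h : N.Normal, letI : N.Normal := h; X (G ⧸ N)

/-- `ρ*(G)`: the intersection of all normal subgroups of `G` whose quotient belongs to `X`. -/
def rhoStar (X : (G : Type u) → [Group G] → Prop) (G : Type u) [Group G] : Subgroup G :=
  sInf {N : Subgroup G | QuotMem X G N}

/-- `X` is a *residual class*: it is closed under normal subgroups, and for every group `G`
one has `G/ρ*(G) ∈ X` and `ρ*(ρ*(G)) = ρ*(G)`. -/
def IsResidualClass (X : (G : Type u) → [Group G] → Prop) : Prop :=
  ClosedUnderNormalSubgroups X ∧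
  (∀ (G : Type u) [Group G], QuotMem X G (rhoStar X G)) ∧
  (∀ (G : Type u) [Group G], rhoStar X ↥(rhoStar X G) = ⊤)

/-- `X_*`: the class of groups having no nontrivial quotient in `X`. -/
def lowerStar (X : (G : Type u) → [Group G] → Prop) :
    (G : Type u) → [Group G] → Prop :=
  fun G _ => ∀ N : Subgroup G, N.Normal → N ≠ ⊤ → ¬ QuotMem X G N

section Aux
variable {X : (G : Type u) → [Group G] → Prop}

theorem centralizer_normal_aux {G : Type u} [Group G] {N : Subgroup G} (hN : N.Normal) :
    (Subgroup.centralizer (N : Set G)).Normal := by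
  constructor
  intro g hg x
  rw [Subgroup.mem_centralizer_iff] at hg ⊢
  intro n hn
  have hmem : x⁻¹ * n * x ∈ N := by
    have := hN.conj_mem n hn x⁻¹
    simpa using this
  have h := hg (x⁻¹ * n * x) hmem
  have h2 := congrArg (fun y => x * y * x⁻¹) h
  simpa [mul_assoc] using h2

/-- A group in both `X` and `X_*` is trivial. -/
theorem subsingleton_of_mem_both (hclass : IsGroupClass X) {H : Type u} [Group H]
    (hX : X H) (hs : lowerStar X H) : Subsingleton H := by
  by_contra hns
  have : Nontrivial H := not_subsingleton_iff_nontrivial.mp hns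
  refine hs ⊥ inferInstance bot_ne_top ⟨inferInstance, ?_⟩
  exact hclass.2 H (H ⧸ (⊥ : Subgroup H)) QuotientGroup.quotientBot.symm hX

theorem eq_bot_of_mem_both (hclass : IsGroupClass X) {G : Type u} [Group G] {K : Subgroup G}
    (hX : X ↥K) (hs : lowerStar X ↥K) : K = ⊥ := by
  have := subsingleton_of_mem_both hclass hX hs
  exact Subgroup.eq_bot_of_subsingleton K

/-- `ρ*(G) ∈ X_*`. -/
theorem rhoStar_mem_lowerStar (hres : IsResidualClass X) (G : Type u) [Group G] :
    lowerStar X ↥(rhoStar X G) := by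
  intro M hM hMne hQ
  have h := hres.2.2 G
  have hle : rhoStar X ↥(rhoStar X G) ≤ M := sInf_le hQ
  rw [h] at hle
  exact hMne (top_le_iff.mp hle)

end Aux

/-- Let `X` be a residual class of groups, and suppose that the class `X_*` is closed under
normal subgroups and contains all abelian groups. Let `G` be any group and `N` a normal
subgroup of `G`. Then `G` belongs to `X` if and only if both `N` and the centralizer
`Z_G(N)` belong to `X`. -/
theorem mem_iff_normal_and_centralizer_mem (X : (G : Type u) → [Group G] → Prop)
    (hclass : IsGroupClass X) (hres : IsResidualClass X)
    (hstar_normal : ClosedUnderNormalSubgroups (lowerStar X))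
    (hstar_abelian : ∀ (G : Type u) [Group G], (∀ a b : G, a * b = b * a) → lowerStar X G)
    (G : Type u) [Group G] (N : Subgroup G) (hN : N.Normal) :
    X G ↔ (X ↥N ∧ X ↥(Subgroup.centralizer (N : Set G))) := by
  constructor
  · intro hG
    exact ⟨hres.1 G hG N hN, hres.1 G hG _ (centralizer_normal_aux hN)⟩
  · rintro ⟨hXN, hXZ⟩
    have hsR : lowerStar X ↥(rhoStar X G) := rhoStar_mem_lowerStar hres G
    obtain ⟨hRnorm, hRq⟩ := hres.2.1 G
    -- K := R ⊓ N is trivial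
    set R := rhoStar X G with hRdef
    set K := R ⊓ N with hKdef
    have hKnorm : K.Normal := by
      constructor
      intro k hk g
      rw [Subgroup.mem_inf] at hk ⊢
      exact ⟨hRnorm.conj_mem k hk.1 g, hN.conj_mem k hk.2 g⟩
    have hKR : K ≤ R := inf_le_left
    have hKN : K ≤ N := inf_le_right
    have hXK : X ↥K :=
      hclass.2 _ _ (Subgroup.subgroupOfEquivOfLe hKN)
        (hres.1 ↥N hXN (K.subgroupOf N) (hKnorm.subgroupOf N))
    have hXKR : X ↥(K.subgroupOf R) :=
      hclass.2 _ _ (Subgroup.subgroupOfEquivOfLe hKR).symm hXK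
    have hsKR : lowerStar X ↥(K.subgroupOf R) :=
      hstar_normal ↥R hsR (K.subgroupOf R) (hKnorm.subgroupOf R)
    have hsub : Subsingleton ↥(K.subgroupOf R) :=
      subsingleton_of_mem_both hclass hXKR hsKR
    have hKsub : Subsingleton ↥K :=
      ((Subgroup.subgroupOfEquivOfLe hKR).symm.toEquiv).subsingleton
    have hKbot : K = ⊥ := Subgroup.eq_bot_of_subsingleton K
    -- hence R centralizes N
    have hdis : Disjoint R N := disjoint_iff.mpr hKbot
    have hRZ : R ≤ Subgroup.centralizer (N : Set G) := by
      intro r hr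
      rw [Subgroup.mem_centralizer_iff]
      intro n hn
      exact Subgroup.commute_of_normal_of_disjoint N R hN hRnorm hdis.symm n r hn hr
    -- hence R ∈ X, so R = ⊥
    have hXR : X ↥R :=
      hclass.2 _ _ (Subgroup.subgroupOfEquivOfLe hRZ)
        (hres.1 _ hXZ (R.subgroupOf _) (hRnorm.subgroupOf _))
    have hRbot : R = ⊥ := eq_bot_of_mem_both hclass hXR hsR
    letI := hRnorm
    have e : (G ⧸ R) ≃* G :=
      (QuotientGroup.quotientMulEquivOfEq hRbot).trans QuotientGroup.quotientBot
    exact hclass.2 _ _ e hRq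
end

section
/- Let X be a class of groups that is closed under normal subgroups, closed under extensions, and contains all finite groups. Assume that G is any group and H is a subgroup of G of finite index. Then G ∈ X if and only if H ∈ X. -/
universe u

/-- Let `X` be a class of groups that is closed under normal subgroups, closed under
extensions, and contains all finite groups. Assume that `G` is any group and `H` is a
subgroup of `G` of finite index. Then `G ∈ X` if and only if `H ∈ X`. -/
theorem mem_iff_of_finiteIndex (X : (G : Type u) → [Group G] → Prop)
    (hclass : IsGroupClass X) (hnorm : ClosedUnderNormalSubgroups X)
    (hext : ∀ (G : Type u) [Group G] (N : Subgroup G) [N.Normal],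
      X ↥N → X (G ⧸ N) → X G)
    (hfin : ∀ (G : Type u) [Group G], Finite G → X G)
    (G : Type u) [Group G] (H : Subgroup G) (hH : H.index ≠ 0) :
    X G ↔ X ↥H := by

  obtain ⟨htriv, hiso⟩ := hclass
  have : H.FiniteIndex := ⟨hH⟩
  set N := H.normalCore with hN
  have hNnorm : N.Normal := H.normalCore_normal
  have hNle : N ≤ H := H.normalCore_le
  have hNfin : N.FiniteIndex := inferInstance
  -- N' = N.subgroupOf H
  have hN'norm : (N.subgroupOf H).Normal := hNnorm.subgroupOf H
  have e : ↥(N.subgroupOf H) ≃* ↥N := Subgroup.subgroupOfEquivOfLe hNle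
  have hrel : N.relIndex H ≠ 0 := by
    intro h
    have := Subgroup.relIndex_mul_index hNle
    rw [h, zero_mul] at this
    exact hNfin.index_ne_zero this.symm
  have hquotHfin : Finite (H ⧸ N.subgroupOf H) := by
    apply Nat.finite_of_card_ne_zero
    rwa [← Subgroup.index, ← Subgroup.relIndex]
  have hquotGfin : Finite (G ⧸ N) := by
    apply Nat.finite_of_card_ne_zero
    show N.index ≠ 0
    exact hNfin.index_ne_zero
  constructor
  · intro hG
    have hXN : X ↥N := hnorm G hG N hNnorm
    have hXN' : X ↥(N.subgroupOf H) := hiso _ _ e.symm hXN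
    exact hext ↥H (N.subgroupOf H) hXN' (hfin _ hquotHfin)
  · intro hHX
    have hXN' : X ↥(N.subgroupOf H) := hnorm ↥H hHX (N.subgroupOf H) hN'norm
    have hXN : X ↥N := hiso _ _ e hXN'
    exact hext G N hXN (hfin _ hquotGfin)
end
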